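/- arXiv:2302.05933 — 8 statements merged into one kernel-verified Lean document; each statement's English description precedes it below -/
import Mathlib

section
/- For every d ≥ 1 and every finite collection of pairwise distinct points x₁,…,xₙ ∈ ℝ^d, the Gram matrix (K_d(x_i,x_j))_{1≤i,j≤n} of the neural tangent kernel K_d is positive definite, i.e., its smallest eigenvalue is strictly positive. -/
open Real
open scoped RealInnerProductSpace

/-- The angle `ψ(x,x') = arccos((⟨x,x'⟩ + 1)/√((‖x‖² + 1)(‖x'‖² + 1)))`. -/
noncomputable def ntkPsi (d : ℕ) (x x' : EuclideanSpace ℝ (Fin d)) : ℝ :=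
  Real.arccos ((⟪x, x'⟫ + 1) / Real.sqrt ((‖x‖ ^ 2 + 1) * (‖x'‖ ^ 2 + 1)))

/-- The neural tangent kernel `K_d` of the two-layer ReLU network on `ℝ^d`. -/
noncomputable def ntkK (d : ℕ) (x x' : EuclideanSpace ℝ (Fin d)) : ℝ :=
  (2 / π) * (π - ntkPsi d x x') * (⟪x, x'⟫ + 1)
    + (1 / π) * Real.sqrt (‖x - x'‖ ^ 2 + ‖x‖ ^ 2 * ‖x'‖ ^ 2 - ⟪x, x'⟫ ^ 2) + 1

/-!
Writing `x̂ = (x, 1)`, the kernel is `K(x, x') = 1 + ‖x̂‖ ‖x̂'‖ κ(t)`, where `t` is the cosine of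
the angle between `x̂` and `x̂'` and `κ(t) = t + (2 t arcsin t + √(1 - t²)) / π`. Integrating the
binomial series of `(1 - s²)^(-1/2)` term by term gives `2 t arcsin t + √(1 - t²) = ∑ c_k t^(2k)`
on `[-1, 1]` with every `c_k > 0`. Distinct points have pairwise non-parallel lifts, so the cosine
matrix `C` is a Gram matrix with unit diagonal and off-diagonal entries of modulus `< 1`. By the
Schur product theorem every Hadamard power `C^∘(2k)` is positive semidefinite, and `C^∘(2k) → 1`,
so `∑ c_k C^∘(2k)` is positive definite; conjugating by `diag ‖x̂_i‖` and adding positive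
semidefinite terms keeps it so.
-/

open Set Filter Topology MeasureTheory Matrix

namespace Matrix
variable {ι : Type*}

theorem posSemidef_of_const_one [Fintype ι] : (of fun _ _ => 1 : Matrix ι ι ℝ).PosSemidef := by
  simpa [vecMulVec] using posSemidef_vecMulVec_self_star (fun _ : ι => (1 : ℝ))

theorem PosSemidef.map_pow [Fintype ι] {A : Matrix ι ι ℝ} (hA : A.PosSemidef) (m : ℕ) :
    (A.map (· ^ m)).PosSemidef := by
  induction m with
  | zero => exact (show A.map (· ^ 0) = of fun _ _ => 1 by ext; simp) ▸ posSemidef_of_const_one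
  | succ m ih =>
    have : A.map (· ^ (m + 1)) = A.map (· ^ m) ⊙ A := by ext; simp [pow_succ]
    exact this ▸ ih.hadamard hA

theorem tendsto_map_pow_of_abs_lt_one [DecidableEq ι] {A : Matrix ι ι ℝ} (hdiag : ∀ i, A i i = 1)
    (hoff : Pairwise fun i j => |A i j| < 1) :
    Tendsto (fun m => A.map (· ^ m)) atTop (𝓝 1) := by
  refine tendsto_pi_nhds.mpr fun i => tendsto_pi_nhds.mpr fun j => ?_
  rcases eq_or_ne i j with rfl | hij
  · simp [hdiag]
  · simpa [one_apply_ne hij] using tendsto_pow_atTop_nhds_zero_of_abs_lt_one (hoff hij)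

theorem posDef_map_of_hasSum [Fintype ι] [DecidableEq ι] {A : Matrix ι ι ℝ}
    (hA : A.PosSemidef) (hdiag : ∀ i, A i i = 1) (hoff : Pairwise fun i j => |A i j| < 1)
    {f : ℝ → ℝ} {c : ℕ → ℝ} {e : ℕ → ℕ} (hc : ∀ k, 0 ≤ c k) (hc' : ∃ᶠ k in atTop, 0 < c k)
    (he : Tendsto e atTop atTop) (hf : ∀ i j, HasSum (fun k => c k * A i j ^ e k) (f (A i j))) :
    (A.map f).PosDef := by
  refine PosDef.of_dotProduct_mulVec_pos (hA.isHermitian.map f fun _ => rfl) fun v hv => ?_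
  let Q : Matrix ι ι ℝ →ₗ[ℝ] ℝ :=
    { toFun M := star v ⬝ᵥ M *ᵥ v
      map_add' M N := by simp [add_mulVec]
      map_smul' r M := by simp [smul_mulVec] }
  have hsum : HasSum (fun k => c k * Q (A.map (· ^ e k))) (Q (A.map f)) := by
    have : HasSum (fun k => c k • A.map (· ^ e k)) (A.map f) :=
      Pi.hasSum.mpr fun i => Pi.hasSum.mpr fun j => by simpa using hf i j
    simpa [Function.comp_def] using this.map Q Q.continuous_of_finiteDimensional
  have hlim : ∀ᶠ k in atTop, 0 < Q (A.map (· ^ e k)) := by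
    have := (Q.continuous_of_finiteDimensional.tendsto 1).comp
      ((tendsto_map_pow_of_abs_lt_one hdiag hoff).comp he)
    refine this.eventually (lt_mem_nhds ?_)
    simpa [Q] using PosDef.one.dotProduct_mulVec_pos hv
  obtain ⟨k, hck, hQk⟩ := (hc'.and_eventually hlim).exists
  exact (mul_pos hck hQk).trans_le <| le_hasSum hsum k fun j _ =>
    mul_nonneg (hc j) ((hA.map_pow (e j)).dotProduct_mulVec_nonneg v)

end Matrix

theorem hasSum_intervalIntegral_of_hasSum_deriv {f : ℕ → ℝ → ℝ} {F F' : ℝ → ℝ} {a b : ℝ}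
    (hab : a ≤ b) (hF : ContinuousOn F (Icc a b)) (hF' : ∀ s ∈ Ioo a b, HasDerivAt F (F' s) s)
    (hf_cont : ∀ k, Continuous (f k)) (hf_nonneg : ∀ k, ∀ s ∈ Ioo a b, 0 ≤ f k s)
    (hf : ∀ s ∈ Ioo a b, HasSum (fun k => f k s) (F' s)) :
    HasSum (fun k => ∫ s in a..b, f k s) (F b - F a) := by
  -- `F'` is integrable as a nonnegative derivative, and the series dominates itself.
  have hF'_int : IntervalIntegrable F' volume a b := by
    refine intervalIntegral.intervalIntegrable_deriv_of_nonneg (by rwa [uIcc_of_le hab]) ?_ ?_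
    · simpa [hab] using hF'
    · simp only [hab, min_eq_left, max_eq_right]
      exact fun s hs => (hf s hs).nonneg fun k => hf_nonneg k s hs
  have hae : ∀ {P : ℝ → Prop}, (∀ s ∈ Ioo a b, P s) → ∀ᵐ s, s ∈ uIoc a b → P s := fun hP => by
    filter_upwards [Measure.ae_ne volume b] with s hsb hs
    rw [uIoc_of_le hab] at hs
    exact hP s ⟨hs.1, lt_of_le_of_ne hs.2 hsb⟩
  rw [← intervalIntegral.integral_eq_sub_of_hasDerivAt_of_le hab hF hF' hF'_int]
  refine intervalIntegral.hasSum_integral_of_dominated_convergence f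
    (fun k => (hf_cont k).aestronglyMeasurable) (fun k => hae fun s hs => ?_)
    (hae fun s hs => (hf s hs).summable) ?_ (hae hf)
  · rw [Real.norm_of_nonneg (hf_nonneg k s hs)]
  · refine hF'_int.congr_uIoo fun s hs => ?_
    rw [uIoo_of_le hab] at hs
    exact (hf s hs).tsum_eq.symm

noncomputable def invSqrtCoeff (k : ℕ) : ℝ := Ring.choose (1 / 2 + k - 1 : ℝ) k

lemma invSqrtCoeff_pos (k : ℕ) : 0 < invSqrtCoeff k := by
  rw [invSqrtCoeff, Ring.choose_eq_smul, Polynomial.descPochhammer_smeval_eq_ascPochhammer,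
    Polynomial.ascPochhammer_smeval_eq_eval]
  exact smul_pos (by positivity) (ascPochhammer_pos k _ (by linarith))

lemma hasSum_inv_sqrt_one_sub_sq {s : ℝ} (hs : s ^ 2 < 1) :
    HasSum (fun k => invSqrtCoeff k * s ^ (2 * k)) (√(1 - s ^ 2))⁻¹ := by
  have hs' : s ^ 2 ∈ Metric.eball (0 : ℝ) 1 := by
    rw [Metric.mem_eball, edist_zero_right, Real.enorm_of_nonneg (sq_nonneg s)]
    exact ENNReal.ofReal_lt_one.mpr hs
  have h := (one_div_one_sub_rpow_hasFPowerSeriesOnBall_zero (1 / 2)).hasSum hs'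
  rw [zero_add, ← Real.sqrt_eq_rpow, one_div (√(1 - s ^ 2))] at h
  simpa only [invSqrtCoeff, FormalMultilinearSeries.ofScalars_apply_eq, smul_eq_mul, ← pow_mul,
    mul_comm _ (Ring.choose _ _)] using h

lemma hasSum_arcsin {t : ℝ} (ht₀ : 0 ≤ t) (ht₁ : t ≤ 1) :
    HasSum (fun k => invSqrtCoeff k / (2 * k + 1) * t ^ (2 * k + 1)) (arcsin t) := by
  have hsq : ∀ s ∈ Ioo 0 t, s ^ 2 < 1 := fun s hs => by nlinarith [hs.1, hs.2]
  have h := hasSum_intervalIntegral_of_hasSum_deriv ht₀ continuous_arcsin.continuousOn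
    (fun s hs => ?_) (fun k => by fun_prop) (fun k s hs => ?_)
    (fun s hs => hasSum_inv_sqrt_one_sub_sq (hsq s hs))
  · convert h using 1
    · ext k
      rw [intervalIntegral.integral_const_mul, integral_pow]
      push_cast
      ring
    · rw [arcsin_zero, sub_zero]
  · have hs1 := hsq s hs
    simpa using hasDerivAt_arcsin (by nlinarith) (by nlinarith)
  · exact mul_nonneg (invSqrtCoeff_pos k).le (pow_nonneg hs.1.le _)

lemma hasSum_one_sub_sqrt_one_sub_sq {t : ℝ} (ht₀ : 0 ≤ t) (ht₁ : t ≤ 1) :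
    HasSum (fun k => invSqrtCoeff k / (2 * k + 2) * t ^ (2 * k + 2)) (1 - √(1 - t ^ 2)) := by
  have hsq : ∀ s ∈ Ioo 0 t, s ^ 2 < 1 := fun s hs => by nlinarith [hs.1, hs.2]
  have h := hasSum_intervalIntegral_of_hasSum_deriv
    (f := fun k s => invSqrtCoeff k * s ^ (2 * k + 1)) (F := fun s => -√(1 - s ^ 2))
    (F' := fun s => s * (√(1 - s ^ 2))⁻¹) ht₀ (by fun_prop) (fun s hs => ?_)
    (fun k => by fun_prop) (fun k s hs => ?_) (fun s hs => ?_)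
  · convert h using 1
    · ext k
      rw [intervalIntegral.integral_const_mul, integral_pow]
      push_cast
      ring
    · rw [zero_pow two_ne_zero, sub_zero, sqrt_one]
      ring
  · have hs1 : 0 < 1 - s ^ 2 := by linarith [hsq s hs]
    refine (((hasDerivAt_pow 2 s).const_sub 1).sqrt hs1.ne').neg.congr_deriv ?_
    field_simp
    ring
  · exact mul_nonneg (invSqrtCoeff_pos k).le (pow_nonneg hs.1.le _)
  · simpa only [mul_left_comm s, ← pow_succ'] using
      (hasSum_inv_sqrt_one_sub_sq (hsq s hs)).mul_left s

noncomputable def ntkEvenPart (t : ℝ) : ℝ := 2 * t * arcsin t + √(1 - t ^ 2)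

noncomputable def ntkEvenPartCoeff : ℕ → ℝ
  | 0 => 1
  | k + 1 => (2 / (2 * k + 1) - 1 / (2 * k + 2)) * invSqrtCoeff k

lemma ntkEvenPartCoeff_pos : ∀ k, 0 < ntkEvenPartCoeff k
  | 0 => one_pos
  | k + 1 => by
    refine mul_pos ?_ (invSqrtCoeff_pos k)
    rw [sub_pos, div_lt_div_iff₀ (by positivity) (by positivity)]
    linarith

lemma ntkEvenPart_abs (t : ℝ) : ntkEvenPart |t| = ntkEvenPart t := by
  rcases abs_choice t with h | h
  · rw [h]
  · rw [h, ntkEvenPart, ntkEvenPart, arcsin_neg, neg_sq]; ring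

lemma hasSum_ntkEvenPart {t : ℝ} (ht : |t| ≤ 1) :
    HasSum (fun k => ntkEvenPartCoeff k * t ^ (2 * k)) (ntkEvenPart t) := by
  suffices h : ∀ t, 0 ≤ t → t ≤ 1 →
      HasSum (fun k => ntkEvenPartCoeff k * t ^ (2 * k)) (ntkEvenPart t) by
    simpa only [pow_mul, sq_abs, ntkEvenPart_abs] using h |t| (abs_nonneg t) ht
  intro t ht₀ ht₁
  rw [← hasSum_nat_add_iff' 1]
  convert ((hasSum_arcsin ht₀ ht₁).mul_left (2 * t)).sub
    (hasSum_one_sub_sqrt_one_sub_sq ht₀ ht₁) using 1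
  · ext k
    rw [ntkEvenPartCoeff]
    ring
  · rw [Finset.sum_range_one, ntkEvenPartCoeff, ntkEvenPart]
    ring

noncomputable def ntkProfile (t : ℝ) : ℝ :=
  (2 / π) * (π - arccos t) * t + (1 / π) * √(1 - t ^ 2)

lemma ntkProfile_eq (t : ℝ) : ntkProfile t = t + π⁻¹ * ntkEvenPart t := by
  rw [ntkProfile, ntkEvenPart, arccos_eq_pi_div_two_sub_arcsin]
  field_simp
  ring

section InnerProductSpace
variable {F : Type*} [NormedAddCommGroup F] [InnerProductSpace ℝ F]

lemma abs_real_inner_div_norm_mul_norm_lt_one_of_linearIndependent {a b : F}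
    (h : LinearIndependent ℝ ![a, b]) : |⟪a, b⟫ / (‖a‖ * ‖b‖)| < 1 := by
  refine (abs_real_inner_div_norm_mul_norm_le_one a b).lt_of_ne ?_
  rw [Ne, abs_real_inner_div_norm_mul_norm_eq_one_iff]
  rintro ⟨-, r, -, rfl⟩
  simpa using LinearIndependent.pair_iff.mp h r (-1) (by simp)

theorem posSemidef_inner_div_norm_mul_norm {ι : Type*} [Fintype ι] (y : ι → F) :
    (of fun i j => ⟪y i, y j⟫ / (‖y i‖ * ‖y j‖)).PosSemidef := by
  have h : (of fun i j => ⟪y i, y j⟫ / (‖y i‖ * ‖y j‖)) = gram ℝ fun i => ‖y i‖⁻¹ • y i := by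
    ext i j
    simp only [of_apply, gram, real_inner_smul_left, real_inner_smul_right]
    ring
  exact h ▸ posSemidef_gram ℝ _

theorem posDef_ntkProfile_kernel {ι : Type*} [Fintype ι] [DecidableEq ι] {y : ι → F}
    (hy₀ : ∀ i, y i ≠ 0) (hy : Pairwise fun i j => LinearIndependent ℝ ![y i, y j]) :
    (of fun i j => ‖y i‖ * ‖y j‖ * ntkProfile (⟪y i, y j⟫ / (‖y i‖ * ‖y j‖))).PosDef := by
  set C : Matrix ι ι ℝ := of fun i j => ⟪y i, y j⟫ / (‖y i‖ * ‖y j‖)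
  have hC : C.PosSemidef := posSemidef_inner_div_norm_mul_norm y
  have hdiag : ∀ i, C i i = 1 := fun i => by
    simp only [C, of_apply, real_inner_self_eq_norm_mul_norm]
    exact div_self (mul_self_ne_zero.mpr (norm_ne_zero_iff.mpr (hy₀ i)))
  have hoff : Pairwise fun i j => |C i j| < 1 := fun i j hij =>
    abs_real_inner_div_norm_mul_norm_lt_one_of_linearIndependent (hy hij)
  have hprofile : C.map ntkProfile = C + π⁻¹ • C.map ntkEvenPart := by
    ext i j
    simp [ntkProfile_eq]
  have hconj : (of fun i j => ‖y i‖ * ‖y j‖ * ntkProfile (⟪y i, y j⟫ / (‖y i‖ * ‖y j‖)))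
      = star (diagonal fun i => ‖y i‖) * C.map ntkProfile * diagonal fun i => ‖y i‖ := by
    ext i j
    simp only [C, of_apply, star_eq_conjTranspose, diagonal_conjTranspose, star_trivial,
      diagonal_mul, mul_diagonal, map_apply]
    ring
  rw [hconj, IsUnit.posDef_star_left_conjugate_iff
    (isUnit_diagonal.mpr (Pi.isUnit_iff.mpr fun i => (norm_ne_zero_iff.mpr (hy₀ i)).isUnit)),
    hprofile]
  refine PosDef.posSemidef_add hC (PosDef.smul ?_ (inv_pos.mpr pi_pos))
  exact posDef_map_of_hasSum hC hdiag hoff (fun k => (ntkEvenPartCoeff_pos k).le)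
    (Frequently.of_forall ntkEvenPartCoeff_pos) (tendsto_id.const_mul_atTop' two_pos)
    fun i j => hasSum_ntkEvenPart (abs_real_inner_div_norm_mul_norm_le_one _ _)

end InnerProductSpace

section augment
variable {E : Type*} [NormedAddCommGroup E]

noncomputable def augment (x : E) : WithLp 2 (E × ℝ) := WithLp.toLp 2 (x, 1)

lemma inner_augment [InnerProductSpace ℝ E] (x y : E) : ⟪augment x, augment y⟫ = ⟪x, y⟫ + 1 := by
  simp [augment, WithLp.prod_inner_apply]

lemma norm_augment_sq [InnerProductSpace ℝ E] (x : E) : ‖augment x‖ ^ 2 = ‖x‖ ^ 2 + 1 := by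
  rw [← real_inner_self_eq_norm_sq, inner_augment, real_inner_self_eq_norm_sq]

lemma augment_ne_zero (x : E) : augment x ≠ 0 := by
  intro h
  simpa [augment] using congrArg (fun v => (WithLp.ofLp v).2) h

lemma linearIndependent_augment [Module ℝ E] {x y : E} (h : x ≠ y) :
    LinearIndependent ℝ ![augment x, augment y] := by
  refine LinearIndependent.pair_iff.mpr fun s t hst => ?_
  have h₁ : s • x + t • y = 0 := congrArg (fun v => (WithLp.ofLp v).1) hst
  have h₂ : s + t = 0 := by simpa [augment] using congrArg (fun v => (WithLp.ofLp v).2) hst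
  obtain rfl : t = -s := by linarith
  have hs : s • (x - y) = 0 := by rwa [smul_sub, sub_eq_add_neg, ← neg_smul]
  have hs : s = 0 := (smul_eq_zero.mp hs).resolve_right (sub_ne_zero.mpr h)
  exact ⟨hs, by simp [hs]⟩

end augment

lemma ntkK_eq_ntkProfile (d : ℕ) (x y : EuclideanSpace ℝ (Fin d)) :
    ntkK d x y = 1 + ‖augment x‖ * ‖augment y‖
      * ntkProfile (⟪augment x, augment y⟫ / (‖augment x‖ * ‖augment y‖)) := by
  have ha : 0 < ‖augment x‖ := norm_pos_iff.mpr (augment_ne_zero x)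
  have hb : 0 < ‖augment y‖ := norm_pos_iff.mpr (augment_ne_zero y)
  have hnorms : √((‖x‖ ^ 2 + 1) * (‖y‖ ^ 2 + 1)) = ‖augment x‖ * ‖augment y‖ := by
    rw [← norm_augment_sq, ← norm_augment_sq, ← mul_pow, sqrt_sq (by positivity)]
  have hsine : √(‖x - y‖ ^ 2 + ‖x‖ ^ 2 * ‖y‖ ^ 2 - ⟪x, y⟫ ^ 2) = ‖augment x‖ * ‖augment y‖
      * √(1 - (⟪augment x, augment y⟫ / (‖augment x‖ * ‖augment y‖)) ^ 2) := by
    have h : ‖x - y‖ ^ 2 + ‖x‖ ^ 2 * ‖y‖ ^ 2 - ⟪x, y⟫ ^ 2 = (‖augment x‖ * ‖augment y‖) ^ 2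
        * (1 - (⟪augment x, augment y⟫ / (‖augment x‖ * ‖augment y‖)) ^ 2) := by
      rw [div_pow, mul_sub, mul_one, mul_div_cancel₀ _ (by positivity), mul_pow, norm_augment_sq,
        norm_augment_sq, inner_augment, norm_sub_sq_real]
      ring
    rw [h, sqrt_mul (sq_nonneg _), sqrt_sq (by positivity)]
  rw [ntkK, ntkPsi, hnorms, ← inner_augment, hsine, ntkProfile]
  field_simp
  ring

theorem ntk_gram_posDef_general (d : ℕ) (n : ℕ)
    (x : Fin n → EuclideanSpace ℝ (Fin d)) (hx : Function.Injective x) :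
    (Matrix.of fun i j => ntkK d (x i) (x j)).PosDef := by
  have h := PosDef.posSemidef_add posSemidef_of_const_one <| posDef_ntkProfile_kernel
    (fun i => augment_ne_zero (x i)) fun i j hij => linearIndependent_augment (hx.ne hij)
  convert h using 1
  ext i j
  simp [ntkK_eq_ntkProfile]

/-- **Positive definiteness of the NTK on `ℝ^d`.**  For every `d ≥ 1` and every finite
collection of pairwise distinct points in `ℝ^d`, the NTK Gram matrix is positive definite. -/
theorem ntk_gram_posDef (d : ℕ) (hd : 1 ≤ d) (n : ℕ)
    (x : Fin n → EuclideanSpace ℝ (Fin d)) (hx : Function.Injective x) :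
    (Matrix.of fun i j => ntkK d (x i) (x j)).PosDef :=
  ntk_gram_posDef_general d n x hx
end

section
/- Let f : [−1,1] → ℝ be given by a power series f(t) = Σ_{k=0}^∞ a_k t^k convergent on [−1,1], with a_k ≥ 0 for all k and a_k > 0 for infinitely many k, and define the kernel K(x,x') = f(⟨x,x'⟩) on the unit sphere S^d ⊂ ℝ^{d+1}. Then for every finite collection of pairwise distinct points x₁,…,xₙ in the open upper hemisphere S^d₊ = {x ∈ S^d : x_{d+1} > 0}, the Gram matrix (K(x_i,x_j))_{1≤i,j≤n} is positive definite. -/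
open scoped RealInnerProductSpace

/-!
The Gram matrix `G = (⟪xᵢ, xⱼ⟫)` is positive semidefinite, hence so are its Hadamard powers
`G^∘k` (Schur product theorem), and the kernel matrix is `F = ∑ aₖ G^∘k`. For distinct points of the
open upper hemisphere `|⟪xᵢ, xⱼ⟫| < 1` off the diagonal (they are neither equal nor antipodal),
so `G^∘k → 1`. For `c ≠ 0` the quadratic forms `cᵀ G^∘k c` are thus eventually positive, and since
`aₖ > 0` for arbitrarily large `k`, some term `aₖ cᵀ G^∘k c` of the nonnegative series for
`cᵀ F c` is positive.
-/

open Filter Topology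
open scoped ComplexOrder

namespace Matrix

variable {n : Type*}

theorem PosSemidef.map_pow_s1 [Finite n] {𝕜 : Type*} [RCLike 𝕜] {A : Matrix n n 𝕜}
    (hA : A.PosSemidef) (k : ℕ) : (A.map (· ^ k)).PosSemidef := by
  induction k with
  | zero =>
    convert posSemidef_vecMulVec_self_star (fun _ : n => (1 : 𝕜)) using 1
    ext i j
    simp [vecMulVec]
  | succ k ih =>
    convert ih.hadamard hA using 1
    ext i j
    simp [pow_succ]

theorem tendsto_map_pow_atTop_nhds_one [DecidableEq n] {R : Type*} [SeminormedRing R]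
    {M : Matrix n n R} (hdiag : ∀ i, M i i = 1) (hoff : ∀ i j, i ≠ j → ‖M i j‖ < 1) :
    Tendsto (fun k : ℕ => M.map (· ^ k)) atTop (𝓝 1) := by
  refine tendsto_pi_nhds.2 fun i => tendsto_pi_nhds.2 fun j => ?_
  rcases eq_or_ne i j with rfl | hij
  · simpa [hdiag] using tendsto_const_nhds
  · simpa [hij] using tendsto_pow_atTop_nhds_zero_of_norm_lt_one (hoff i j hij)

theorem PosDef.of_hasSum_smul [Fintype n] [DecidableEq n] {a : ℕ → ℝ}
    {A : ℕ → Matrix n n ℝ} {F : Matrix n n ℝ} (hF : HasSum (fun k => a k • A k) F)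
    (ha : ∀ k, 0 ≤ a k) (ha' : {k | 0 < a k}.Infinite) (hA : ∀ k, (A k).PosSemidef)
    (hlim : Tendsto A atTop (𝓝 1)) : F.PosDef := by
  have hherm : F.IsHermitian := by
    have hAherm : ∀ k, (A k)ᴴ = A k := fun k => (hA k).isHermitian.eq
    refine hF.matrix_conjTranspose.unique ?_
    simpa only [conjTranspose_smul, star_trivial, hAherm] using hF
  refine posDef_iff_dotProduct_mulVec.2 ⟨hherm, fun c hc => ?_⟩
  let q : Matrix n n ℝ →+ ℝ :=
    { toFun := fun M => star c ⬝ᵥ M *ᵥ c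
      map_zero' := by simp
      map_add' := fun M N => by simp [add_mulVec, dotProduct_add] }
  have hq : Continuous q :=
    continuous_const.dotProduct (continuous_id.matrix_mulVec continuous_const)
  have hqF : HasSum (fun k => a k * q (A k)) (q F) := by
    simpa [q, Function.comp_def, smul_mulVec, dotProduct_smul] using hF.map q hq
  have hq1 : 0 < q 1 := by simpa [q] using dotProduct_star_self_pos_iff.2 hc
  have hevent : ∀ᶠ k in atTop, 0 < q (A k) :=
    ((hq.tendsto 1).comp hlim).eventually (lt_mem_nhds hq1)
  obtain ⟨k, hak, hqk⟩ := ((Nat.frequently_atTop_iff_infinite.2 ha').and_eventually hevent).exists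
  exact (mul_pos hak hqk).trans_le
    (le_hasSum hqF k fun j _ => mul_nonneg (ha j) ((hA j).dotProduct_mulVec_nonneg c))

end Matrix

theorem abs_real_inner_lt_one_of_norm_eq_one {F : Type*} [NormedAddCommGroup F]
    [InnerProductSpace ℝ F] {x y : F} (hx : ‖x‖ = 1) (hy : ‖y‖ = 1) (hxy : x ≠ y)
    (hxy' : x ≠ -y) : |⟪x, y⟫| < 1 := by
  rw [abs_lt, neg_lt, ← inner_neg_right]
  exact ⟨(inner_lt_one_iff_real_of_norm_eq_one hx (by rwa [norm_neg])).2 hxy',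
    (inner_lt_one_iff_real_of_norm_eq_one hx hy).2 hxy⟩

/-- **Inner-product kernels with infinitely many positive power-series coefficients are
positive definite on the open upper hemisphere.**  If `f(t) = Σ aₖ tᵏ` on `[-1,1]` with
`aₖ ≥ 0` for all `k` and `aₖ > 0` for infinitely many `k`, then for pairwise distinct points
`x₁,…,xₙ` on the unit sphere of `ℝ^{d+1}` whose last coordinate is positive, the Gram matrix
`(f(⟨xᵢ,xⱼ⟩))` is positive definite. -/
theorem innerProductKernel_posDef_upperHemisphere
    (d : ℕ) (a : ℕ → ℝ) (ha : ∀ k, 0 ≤ a k) (ha' : {k : ℕ | 0 < a k}.Infinite)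
    (f : ℝ → ℝ) (hf : ∀ t ∈ Set.Icc (-1 : ℝ) 1, HasSum (fun k => a k * t ^ k) (f t))
    (n : ℕ) (x : Fin n → EuclideanSpace ℝ (Fin (d + 1)))
    (hsphere : ∀ i, ‖x i‖ = 1) (hupper : ∀ i, 0 < x i (Fin.last d))
    (hx : Function.Injective x) :
    (Matrix.of fun i j => f ⟪x i, x j⟫).PosDef := by
  have hmem : ∀ i j, ⟪x i, x j⟫ ∈ Set.Icc (-1 : ℝ) 1 := fun i j => abs_le.1 <| by
    simpa [hsphere] using abs_real_inner_le_norm (x i) (x j)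
  have hoff : ∀ i j, i ≠ j → |⟪x i, x j⟫| < 1 := fun i j hij =>
    abs_real_inner_lt_one_of_norm_eq_one (hsphere i) (hsphere j) (hx.ne hij) fun h => by
      have := congrArg (· (Fin.last d)) h
      simp only [PiLp.neg_apply] at this
      linarith [hupper i, hupper j]
  refine Matrix.PosDef.of_hasSum_smul (A := fun k => (Matrix.gram ℝ x).map (· ^ k))
    (Pi.hasSum.2 fun i => Pi.hasSum.2 fun j => by simpa using hf _ (hmem i j)) ha ha'
    (fun k => (Matrix.posSemidef_gram ℝ x).map_pow_s1 k)
    (Matrix.tendsto_map_pow_atTop_nhds_one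
      (fun i => inner_self_eq_one_of_norm_eq_one (hsphere i)) hoff)
end

section
/- Let α ≥ 1, n ≥ 2, and let x₁,…,xₙ be pairwise distinct points in [0,π] with d_min = min_{i≠j} |x_i − x_j|. Then the smallest eigenvalue λ_min of the matrix (G_α(x_i,x_j))_{1≤i,j≤n} satisfies d_min/(2π) ≤ λ_min ≤ 2·d_min/π. In particular this matrix is positive definite. -/
/-!
Sort the points as `p₀ ≤ ⋯ ≤ pₘ`, reorder the weights `v` accordingly, and let `S_k` be their
partial sums and `s = ∑ vᵢ`. Splitting `|pᵢ - pⱼ|` into the gaps `p_{k+1} - p_k` it spans gives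
`∑ᵢⱼ vᵢ vⱼ |pᵢ - pⱼ| = 2 ∑ₖ (p_{k+1} - p_k) S_k (s - S_k)`, hence, for points in an interval of
length `c` and with gaps at least `d`,
`c s² - ∑ᵢⱼ vᵢ vⱼ |pᵢ - pⱼ| ≥ ∑ₖ (p_{k+1} - p_k) (S_k² + (s - S_k)²) ≥ d ∑ₖ (S_k² + (s - S_k)²)`,
where the last sum is at least `∑ vᵢ² / 2` because each `vᵢ` is the jump of both `S` and `s - S`
across one cut. Since `G_α = (α - 1) + (π - |x - x'|)/π`, the Rayleigh quotient of the Gram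
matrix is at least `d_min / (2π)`; the vector `e_i - e_j` of a closest pair has Rayleigh quotient
`d_min / π`.
-/

open Real

/-- The kernel `G_α(x,x') = α − |x − x'|/π`. -/
noncomputable def kernelG (α x x' : ℝ) : ℝ := α - |x - x'| / π

open Finset Matrix

namespace Matrix

variable {n R : Type*} [Fintype n]

lemma dotProduct_mulVec_eq_sum_sum [CommSemiring R] (A : Matrix n n R) (v : n → R) :
    v ⬝ᵥ A *ᵥ v = ∑ i, ∑ j, v i * v j * A i j := by
  simp only [dotProduct, mulVec, mul_sum]
  exact sum_congr rfl fun i _ => sum_congr rfl fun j _ => by ring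

lemma single_sub_single_dotProduct_mulVec [DecidableEq n] [Ring R] (A : Matrix n n R) (i j : n) :
    (Pi.single i 1 - Pi.single j 1) ⬝ᵥ A *ᵥ (Pi.single i 1 - Pi.single j 1)
      = A i i + A j j - A i j - A j i := by
  simp only [mulVec_sub, mulVec_single, MulOpposite.op_one, one_smul, dotProduct_sub,
    sub_dotProduct, single_dotProduct, col_apply, one_mul]
  abel

lemma single_sub_single_dotProduct_self [DecidableEq n] [Ring R] {i j : n} (hij : i ≠ j) :
    (Pi.single i 1 - Pi.single j 1 : n → R) ⬝ᵥ (Pi.single i 1 - Pi.single j 1) = 2 := by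
  simp [dotProduct_sub, hij, hij.symm, one_add_one_eq_two]

end Matrix

namespace Matrix.IsHermitian

variable {n : Type*} [Fintype n] [DecidableEq n] {A : Matrix n n ℝ} (hA : A.IsHermitian)

lemma dotProduct_eigenvectorBasis_self (i : n) :
    ⇑(hA.eigenvectorBasis i) ⬝ᵥ ⇑(hA.eigenvectorBasis i) = 1 := by
  have := real_inner_self_eq_norm_sq (hA.eigenvectorBasis i)
  rw [hA.eigenvectorBasis.orthonormal.1 i, EuclideanSpace.inner_eq_star_dotProduct] at this
  simpa using this

lemma le_eigenvalues_of_le_dotProduct_mulVec {c : ℝ}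
    (h : ∀ v, c * (v ⬝ᵥ v) ≤ v ⬝ᵥ A *ᵥ v) (i : n) : c ≤ hA.eigenvalues i := by
  simpa [hA.eigenvalues_eq i, hA.dotProduct_eigenvectorBasis_self i] using
    h (hA.eigenvectorBasis i)

lemma dotProduct_self_eq_sum_sq (v : n → ℝ) :
    v ⬝ᵥ v = ∑ i, (v ⬝ᵥ hA.eigenvectorBasis i) ^ 2 := by
  have := hA.eigenvectorBasis.sum_inner_mul_inner (WithLp.toLp 2 v) (WithLp.toLp 2 v)
  simp only [EuclideanSpace.inner_eq_star_dotProduct, star_trivial] at this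
  simpa [sq, dotProduct_comm v] using this.symm

lemma dotProduct_mulVec_eq_sum_eigenvalues_mul_sq (v : n → ℝ) :
    v ⬝ᵥ A *ᵥ v = ∑ i, hA.eigenvalues i * (v ⬝ᵥ hA.eigenvectorBasis i) ^ 2 := by
  have h := congrArg (fun w => A *ᵥ WithLp.ofLp w)
    (hA.eigenvectorBasis.sum_repr' (WithLp.toLp 2 v))
  simp only [WithLp.ofLp_sum, WithLp.ofLp_smul, mulVec_sum, mulVec_smul, mulVec_eigenvectorBasis,
    EuclideanSpace.inner_eq_star_dotProduct, star_trivial] at h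
  simp only [← h, dotProduct_sum, dotProduct_smul, smul_eq_mul]
  exact sum_congr rfl fun i _ => by ring

lemma exists_eigenvalues_le_of_dotProduct_mulVec_le {v : n → ℝ} (hv : v ≠ 0) {c : ℝ}
    (h : v ⬝ᵥ A *ᵥ v ≤ c * (v ⬝ᵥ v)) : ∃ i, hA.eigenvalues i ≤ c := by
  by_contra! hlt
  have hpos : 0 < ∑ i, (v ⬝ᵥ hA.eigenvectorBasis i) ^ 2 := by
    simpa [← hA.dotProduct_self_eq_sum_sq] using dotProduct_self_star_pos_iff.2 hv
  obtain ⟨i, -, hi⟩ := exists_lt_of_sum_lt (f := fun _ => (0 : ℝ)) (by simpa using hpos)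
  refine h.not_gt ?_
  rw [hA.dotProduct_mulVec_eq_sum_eigenvalues_mul_sq, hA.dotProduct_self_eq_sum_sq, mul_sum]
  exact sum_lt_sum (fun j _ => by gcongr; exact (hlt j).le)
    ⟨i, mem_univ _, mul_lt_mul_of_pos_right (hlt i) hi⟩

end Matrix.IsHermitian

lemma sum_sum_mul_mul_sub_sq {ι R : Type*} [CommRing R] (s : Finset ι) (v f : ι → R) :
    ∑ i ∈ s, ∑ j ∈ s, v i * v j * (f i - f j) ^ 2
      = 2 * ((∑ i ∈ s, v i) * ∑ i ∈ s, f i ^ 2 * v i - (∑ i ∈ s, f i * v i) ^ 2) := by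
  calc ∑ i ∈ s, ∑ j ∈ s, v i * v j * (f i - f j) ^ 2
      = ∑ i ∈ s, ∑ j ∈ s, (f i ^ 2 * v i * v j + v i * (f j ^ 2 * v j)
          - 2 * (f i * v i * (f j * v j))) :=
        sum_congr rfl fun _ _ => sum_congr rfl fun _ _ => by ring
    _ = (∑ i ∈ s, f i ^ 2 * v i) * ∑ i ∈ s, v i + (∑ i ∈ s, v i) * ∑ i ∈ s, f i ^ 2 * v i
          - 2 * ((∑ i ∈ s, f i * v i) * ∑ i ∈ s, f i * v i) := by
        simp only [sum_add_distrib, sum_sub_distrib, ← mul_sum, ← sum_mul]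
    _ = _ := by ring

lemma abs_sub_eq_sum_gaps {p : ℕ → ℝ} {m i j : ℕ} (hp : ∀ k < m, p k ≤ p (k + 1))
    (hi : i ≤ m) (hj : j ≤ m) :
    |p i - p j| = ∑ k ∈ range m,
      (p (k + 1) - p k) * ((if i ≤ k then 1 else 0) - (if j ≤ k then 1 else 0)) ^ 2 := by
  wlog hij : i ≤ j generalizing i j
  · rw [abs_sub_comm, this hj hi (by omega)]
    exact sum_congr rfl fun k _ => by ring
  have hsum : ∑ k ∈ range m,
      (p (k + 1) - p k) * ((if i ≤ k then 1 else 0) - (if j ≤ k then 1 else 0)) ^ 2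
      = ∑ k ∈ Ico i j, (p (k + 1) - p k) := by
    have hsub : Ico i j ⊆ range m := fun k hk => by
      simp only [mem_Ico, mem_range] at hk ⊢; omega
    rw [← inter_eq_right.2 hsub, ← sum_ite_mem]
    refine sum_congr rfl fun k _ => ?_
    simp only [mem_Ico]
    split_ifs <;> first | omega | ring
  have hgaps : ∑ k ∈ Ico i j, (p (k + 1) - p k) = p j - p i := sum_Ico_sub _ hij
  have hnonneg : 0 ≤ p j - p i :=
    hgaps ▸ sum_nonneg fun k hk => sub_nonneg.2 (hp k (by simp only [mem_Ico] at hk; omega))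
  rw [hsum, hgaps, abs_sub_comm, abs_of_nonneg hnonneg]

lemma sum_range_ite_le_mul (v : ℕ → ℝ) {k n : ℕ} (hk : k < n) :
    ∑ i ∈ range n, (if i ≤ k then 1 else 0) * v i = ∑ i ∈ range (k + 1), v i := by
  simp only [ite_mul, one_mul, zero_mul, sum_ite, sum_const_zero, add_zero]
  congr 1
  ext i
  simp only [mem_filter, mem_range]
  omega

lemma sum_sum_mul_mul_abs_sub_eq {p : ℕ → ℝ} (v : ℕ → ℝ) {m : ℕ}
    (hp : ∀ k < m, p k ≤ p (k + 1)) :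
    ∑ i ∈ range (m + 1), ∑ j ∈ range (m + 1), v i * v j * |p i - p j|
      = 2 * ∑ k ∈ range m, (p (k + 1) - p k) * ((∑ i ∈ range (k + 1), v i)
          * (∑ i ∈ range (m + 1), v i - ∑ i ∈ range (k + 1), v i)) := by
  calc ∑ i ∈ range (m + 1), ∑ j ∈ range (m + 1), v i * v j * |p i - p j|
      = ∑ i ∈ range (m + 1), ∑ k ∈ range m, ∑ j ∈ range (m + 1), (p (k + 1) - p k) *
          (v i * v j * ((if i ≤ k then 1 else 0) - (if j ≤ k then 1 else 0)) ^ 2) := by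
        refine sum_congr rfl fun i hi => ?_
        rw [sum_comm]
        refine sum_congr rfl fun j hj => ?_
        simp only [mem_range] at hi hj
        rw [abs_sub_eq_sum_gaps hp (by omega) (by omega), mul_sum]
        exact sum_congr rfl fun k _ => by ring
    _ = ∑ k ∈ range m, (p (k + 1) - p k) * ∑ i ∈ range (m + 1), ∑ j ∈ range (m + 1),
          v i * v j * ((if i ≤ k then 1 else 0) - (if j ≤ k then 1 else 0)) ^ 2 := by
        rw [sum_comm]
        simp only [mul_sum]
    _ = _ := by
        rw [mul_sum]
        refine sum_congr rfl fun k hk => ?_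
        have hk : k < m + 1 := by simp only [mem_range] at hk; omega
        rw [sum_sum_mul_mul_sub_sq, ← sum_range_ite_le_mul v hk]
        simp only [ite_pow, one_pow, zero_pow two_ne_zero]
        ring

noncomputable def cutEnergy (v : ℕ → ℝ) (m k : ℕ) : ℝ :=
  (∑ i ∈ range (k + 1), v i) ^ 2 + (∑ i ∈ range (m + 1), v i - ∑ i ∈ range (k + 1), v i) ^ 2

lemma sum_sq_le_two_mul_sum_cutEnergy (v : ℕ → ℝ) {m : ℕ} (hm : m ≠ 0) :
    ∑ k ∈ range (m + 1), v k ^ 2 ≤ 2 * ∑ k ∈ range m, cutEnergy v m k := by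
  obtain ⟨m, rfl⟩ := Nat.exists_eq_succ_of_ne_zero hm
  set s := ∑ i ∈ range (m + 1 + 1), v i
  set a : ℕ → ℝ := fun k => ∑ i ∈ range (k + 1), v i
  have he : ∀ k, cutEnergy v (m + 1) k = a k ^ 2 + (s - a k) ^ 2 := fun _ => rfl
  have hfirst : v 0 ^ 2 ≤ cutEnergy v (m + 1) 0 := by
    have : a 0 = v 0 := by simp [a]
    rw [he, this]; nlinarith [sq_nonneg (s - v 0)]
  have hlast : v (m + 1) ^ 2 ≤ cutEnergy v (m + 1) m := by
    have : s - a m = v (m + 1) := by simp [s, a, sum_range_succ _ (m + 1)]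
    rw [he, this]; nlinarith [sq_nonneg (a m)]
  -- `v (k + 1) = a (k + 1) - a k = (s - a k) - (s - a (k + 1))`, and `(x - y)² ≤ 2x² + 2y²`
  have hmid : ∀ k, v (k + 1) ^ 2 ≤ cutEnergy v (m + 1) k + cutEnergy v (m + 1) (k + 1) := by
    intro k
    have : a (k + 1) = a k + v (k + 1) := sum_range_succ _ (k + 1)
    rw [he, he, this]
    nlinarith [sq_nonneg (2 * a k + v (k + 1)), sq_nonneg (2 * (s - a k) - v (k + 1))]
  have hsum := sum_le_sum fun k (_ : k ∈ range m) => hmid k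
  rw [sum_add_distrib] at hsum
  have hsplit : ∑ k ∈ range (m + 1 + 1), v k ^ 2
      = ∑ k ∈ range m, v (k + 1) ^ 2 + v 0 ^ 2 + v (m + 1) ^ 2 := by
    rw [sum_range_succ, sum_range_succ']
  linarith [sum_range_succ' (cutEnergy v (m + 1)) m, sum_range_succ (cutEnergy v (m + 1)) m]

lemma half_mul_sum_sq_le_of_gap {p : ℕ → ℝ} (v : ℕ → ℝ) {m : ℕ} (hm : m ≠ 0)
    {c d : ℝ} (hd : 0 ≤ d) (hgap : ∀ k < m, p k + d ≤ p (k + 1)) (hspan : p m - p 0 ≤ c) :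
    d / 2 * ∑ k ∈ range (m + 1), v k ^ 2 ≤ c * (∑ k ∈ range (m + 1), v k) ^ 2
      - ∑ i ∈ range (m + 1), ∑ j ∈ range (m + 1), v i * v j * |p i - p j| := by
  have hcut : 2 * ∑ k ∈ range m, (p (k + 1) - p k) * ((∑ i ∈ range (k + 1), v i)
      * (∑ i ∈ range (m + 1), v i - ∑ i ∈ range (k + 1), v i))
      = (p m - p 0) * (∑ k ∈ range (m + 1), v k) ^ 2
        - ∑ k ∈ range m, (p (k + 1) - p k) * cutEnergy v m k := by
    rw [mul_sum, ← sum_range_sub p m, sum_mul, ← sum_sub_distrib]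
    exact sum_congr rfl fun k _ => by unfold cutEnergy; ring
  rw [sum_sum_mul_mul_abs_sub_eq v fun k hk => by linarith [hgap k hk], hcut]
  calc d / 2 * ∑ k ∈ range (m + 1), v k ^ 2 ≤ d / 2 * (2 * ∑ k ∈ range m, cutEnergy v m k) := by
        gcongr; exact sum_sq_le_two_mul_sum_cutEnergy v hm
    _ = ∑ k ∈ range m, d * cutEnergy v m k := by
        rw [← mul_assoc, div_mul_cancel₀ d two_ne_zero, mul_sum]
    _ ≤ ∑ k ∈ range m, (p (k + 1) - p k) * cutEnergy v m k := by
        gcongr with k hk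
        · unfold cutEnergy; positivity
        · linarith [hgap k (mem_range.1 hk)]
    _ ≤ _ := by nlinarith [sq_nonneg (∑ k ∈ range (m + 1), v k)]

open Fin.NatCast in
lemma half_mul_sum_sq_le_of_separated {n : ℕ} (hn : 2 ≤ n) {x : Fin n → ℝ}
    {c d : ℝ} (hd : 0 ≤ d) (hspan : ∀ i j, x i - x j ≤ c)
    (hsep : ∀ i j, i ≠ j → d ≤ |x i - x j|) (v : Fin n → ℝ) :
    d / 2 * ∑ i, v i ^ 2 ≤ c * (∑ i, v i) ^ 2 - ∑ i, ∑ j, v i * v j * |x i - x j| := by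
  obtain ⟨m, rfl⟩ : ∃ m, n = m + 1 := ⟨n - 1, by omega⟩
  set σ := Tuple.sort x
  have hmono : Monotone (x ∘ σ) := Tuple.monotone_sort x
  have hgap : ∀ k < m, x (σ (k : Fin (m + 1))) + d ≤ x (σ ((k + 1 : ℕ) : Fin (m + 1))) := by
    intro k hk
    have hlt : (k : Fin (m + 1)) < ((k + 1 : ℕ) : Fin (m + 1)) :=
      (Fin.natCast_lt_natCast (by omega) hk).2 k.lt_succ_self
    have hle : x (σ k) ≤ x (σ (k + 1 : ℕ)) := hmono hlt.le
    have := hsep _ _ (σ.injective.ne hlt.ne)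
    rw [abs_of_nonpos (sub_nonpos.2 hle)] at this
    linarith
  have h := half_mul_sum_sq_le_of_gap (fun k => v (σ (k : Fin (m + 1)))) (by omega) hd hgap
    (hspan _ _)
  simp only [← Fin.sum_univ_eq_sum_range, Fin.cast_val_eq_self] at h
  have hperm : ∀ f : Fin (m + 1) → ℝ, ∑ i, f (σ i) = ∑ i, f i := Equiv.sum_comp σ
  rwa [hperm (fun i => v i ^ 2), hperm, hperm fun i => ∑ j, v i * v (σ j) * |x i - x (σ j)|,
    funext fun i => hperm fun j => v i * v j * |x i - x j|] at h

lemma mul_dotProduct_le_dotProduct_kernelG_mulVec {α : ℝ} (hα : 1 ≤ α) {n : ℕ} (hn : 2 ≤ n)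
    {x : Fin n → ℝ} (hX : ∀ i, x i ∈ Set.Icc 0 π) {d : ℝ} (hd : 0 ≤ d)
    (hsep : ∀ i j, i ≠ j → d ≤ |x i - x j|) (v : Fin n → ℝ) :
    d / (2 * π) * (v ⬝ᵥ v) ≤ v ⬝ᵥ (of fun i j => kernelG α (x i) (x j)) *ᵥ v := by
  have hQ := half_mul_sum_sq_le_of_separated hn hd
    (fun i j => show x i - x j ≤ π by linarith [(hX i).2, (hX j).1]) hsep v
  have hform : v ⬝ᵥ (of fun i j => kernelG α (x i) (x j)) *ᵥ v
      = α * (∑ i, v i) ^ 2 - (∑ i, ∑ j, v i * v j * |x i - x j|) / π := by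
    simp only [dotProduct_mulVec_eq_sum_sum, of_apply, kernelG, mul_sub, sum_sub_distrib, sum_div]
    congr 1
    · rw [sq, sum_mul_sum, mul_sum]
      exact sum_congr rfl fun i _ => by rw [mul_sum]; exact sum_congr rfl fun j _ => by ring
    · exact sum_congr rfl fun i _ => sum_congr rfl fun j _ => by ring
  have hsq : v ⬝ᵥ v = ∑ i, v i ^ 2 := by simp only [dotProduct, sq]
  rw [hform, hsq]
  calc d / (2 * π) * ∑ i, v i ^ 2 = (d / 2 * ∑ i, v i ^ 2) / π := by ring
    _ ≤ (π * (∑ i, v i) ^ 2 - ∑ i, ∑ j, v i * v j * |x i - x j|) / π := by gcongr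
    _ ≤ _ := by
        rw [sub_div, mul_div_cancel_left₀ _ pi_ne_zero]
        nlinarith [sq_nonneg (∑ i, v i)]

/-- **Minimum eigenvalue of the `G_α` Gram matrix.**  For `α ≥ 1`, `n ≥ 2` and pairwise
distinct `x₁,…,xₙ ∈ [0,π]` with `d_min = min_{i≠j} |xᵢ − xⱼ|`, the smallest eigenvalue
`λ_min` of `(G_α(xᵢ,xⱼ))` satisfies `d_min/(2π) ≤ λ_min ≤ 2 d_min/π`; in particular the
matrix is positive definite. -/
theorem kernelG_gram_min_eigenvalue_bounds
    (α : ℝ) (hα : 1 ≤ α) (n : ℕ) (hn : 2 ≤ n)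
    (x : Fin n → ℝ) (hx : Function.Injective x) (hX : ∀ i, x i ∈ Set.Icc (0 : ℝ) π)
    (dmin : ℝ)
    (hdmin : IsLeast {d : ℝ | ∃ i j : Fin n, i ≠ j ∧ d = |x i - x j|} dmin)
    (hM : (Matrix.of fun i j => kernelG α (x i) (x j)).IsHermitian) :
    (∀ i, dmin / (2 * π) ≤ hM.eigenvalues i) ∧
    (∃ i, hM.eigenvalues i ≤ 2 * dmin / π) ∧
    (Matrix.of fun i j => kernelG α (x i) (x j)).PosDef := by
  obtain ⟨⟨i₀, j₀, hij, rfl⟩, hmin⟩ := hdmin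
  have hsep : ∀ i j, i ≠ j → |x i₀ - x j₀| ≤ |x i - x j| := fun i j h => hmin ⟨i, j, h, rfl⟩
  have hpos : 0 < |x i₀ - x j₀| := abs_pos.2 (sub_ne_zero.2 (hx.ne hij))
  have lower := hM.le_eigenvalues_of_le_dotProduct_mulVec
    (mul_dotProduct_le_dotProduct_kernelG_mulVec hα hn hX hpos.le hsep)
  refine ⟨lower, hM.exists_eigenvalues_le_of_dotProduct_mulVec_le
    (v := Pi.single i₀ 1 - Pi.single j₀ 1) (fun h => by simpa [hij] using congrFun h i₀) ?_,
    hM.posDef_iff_eigenvalues_pos.2 fun i => (div_pos hpos (by positivity)).trans_le (lower i)⟩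
  rw [single_sub_single_dotProduct_mulVec, single_sub_single_dotProduct_self hij]
  simp only [of_apply, kernelG, sub_self, abs_zero, zero_div, sub_zero, abs_sub_comm (x j₀)]
  have : 0 ≤ |x i₀ - x j₀| / π := by positivity
  rw [mul_div_assoc]
  linarith
end

section
/- Define on [0,1] the kernels Π₀(x,x') = (1/π)(π − ψ(x,x')) and Π₁(x,x') = (1/π)((1 + x x')(π − ψ(x,x')) + |x − x'|), where ψ(x,x') = arccos((1 + x x')/√((1 + x²)(1 + x'²))). Then Π₀ and Π₁ are positive definite on [0,1]: for any n pairwise distinct points x₁,…,xₙ ∈ [0,1], the Gram matrices (Π₀(x_i,x_j))_{1≤i,j≤n} and (Π₁(x_i,x_j))_{1≤i,j≤n} are positive definite. -/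
open Real

/-- The angle `ψ(x,x') = arccos((1 + x x')/√((1 + x²)(1 + x'²)))` on `ℝ`. -/
noncomputable def ntkPsi1 (x x' : ℝ) : ℝ :=
  Real.arccos ((1 + x * x') / Real.sqrt ((1 + x ^ 2) * (1 + x' ^ 2)))

/-- The arc-cosine kernel of degree 0 on `[0,1]`: `Π₀(x,x') = (1/π)(π − ψ(x,x'))`. -/
noncomputable def Pi0 (x x' : ℝ) : ℝ := (1 / π) * (π - ntkPsi1 x x')

/-- The arc-cosine kernel of degree 1 on `[0,1]`:
`Π₁(x,x') = (1/π)((1 + x x')(π − ψ(x,x')) + |x − x'|)`. -/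
noncomputable def Pi1 (x x' : ℝ) : ℝ :=
  (1 / π) * ((1 + x * x') * (π - ntkPsi1 x x') + |x - x'|)

open MeasureTheory Set Matrix

/-!
Put `t = arctan x`. Then `ψ(x, x') = |t - t'|`, and `cos φ + x sin φ = √(1 + x²) cos (φ - t)` is
the inner product of `(1, x)` with the unit vector of angle `φ`; it is positive exactly on the arc
`|φ - t| < π/2`. Integrating over a full turn, the two arcs of `x` and `x'` overlap in an arc of
length `π - |t - t'|`, which yields the arc-cosine representations
`Π₀(x, x') = π⁻¹ ∫ 𝟙[cos φ + x sin φ > 0] 𝟙[cos φ + x' sin φ > 0] dφ` and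
`Π₁(x, x') = (2/π) ∫ (cos φ + x sin φ)⁺ (cos φ + x' sin φ)⁺ dφ`.
So both matrices are Gram matrices in `L²(-π, π]`, and positive definiteness reduces to the
a.e. linear independence of the features. Along `φ = arctan v + π/2` the features become the
steps `𝟙[v < xᵢ]` and, up to the factor `cos (arctan v) > 0`, the hinges `(xᵢ - v)⁺`, which are
independent for distinct `xᵢ`: compare values just left and right of `xᵢ`, resp. take a second
difference at `xᵢ`.
-/

theorem sq_sum_mul_eq {α ι : Type*} [Fintype ι] (f : ι → α → ℝ) (c : ι → ℝ) (a : α) :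
    (∑ i, c i * f i a) ^ 2 = ∑ i, ∑ j, c i * c j * (f i a * f j a) := by
  rw [sq, Finset.sum_mul_sum]
  exact Finset.sum_congr rfl fun i _ => Finset.sum_congr rfl fun j _ => by ring

section Gram

variable {α ι : Type*} [MeasurableSpace α] [Fintype ι] {μ : Measure α} {f : ι → α → ℝ}

theorem integrable_sq_sum_mul (hf : ∀ i j, Integrable (fun a => f i a * f j a) μ) (c : ι → ℝ) :
    Integrable (fun a => (∑ i, c i * f i a) ^ 2) μ := by
  simp_rw [sq_sum_mul_eq]
  exact integrable_finsetSum _ fun i _ => integrable_finsetSum _ fun j _ => (hf i j).const_mul _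

theorem integral_sq_sum_mul (hf : ∀ i j, Integrable (fun a => f i a * f j a) μ) (c : ι → ℝ) :
    ∫ a, (∑ i, c i * f i a) ^ 2 ∂μ = ∑ i, ∑ j, c i * c j * ∫ a, f i a * f j a ∂μ := by
  simp_rw [sq_sum_mul_eq, ← integral_const_mul]
  rw [integral_finsetSum _ fun i _ => integrable_finsetSum _ fun j _ => (hf i j).const_mul _]
  exact Finset.sum_congr rfl fun i _ => integral_finsetSum _ fun j _ => (hf i j).const_mul _

theorem posDef_of_integral_mul (hf : ∀ i j, Integrable (fun a => f i a * f j a) μ)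
    (hli : ∀ c : ι → ℝ, (∀ᵐ a ∂μ, ∑ i, c i * f i a = 0) → c = 0) :
    (Matrix.of fun i j => ∫ a, f i a * f j a ∂μ).PosDef := by
  refine .of_dotProduct_mulVec_pos ?_ fun c hc => ?_
  · ext i j
    simp only [conjTranspose_apply, of_apply, star_trivial, mul_comm]
  have hquad : star c ⬝ᵥ (Matrix.of fun i j => ∫ a, f i a * f j a ∂μ) *ᵥ c
      = ∫ a, (∑ i, c i * f i a) ^ 2 ∂μ := by
    rw [integral_sq_sum_mul hf]
    simp only [dotProduct, mulVec, of_apply, Pi.star_apply, star_trivial, Finset.mul_sum]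
    exact Finset.sum_congr rfl fun i _ => Finset.sum_congr rfl fun j _ => by ring
  rw [hquad]
  refine (integral_nonneg fun a => sq_nonneg _).lt_of_ne' fun h0 => hc (hli c ?_)
  filter_upwards [(integral_eq_zero_iff_of_nonneg (fun a => sq_nonneg _)
    (integrable_sq_sum_mul hf c)).1 h0] with a ha
  exact pow_eq_zero_iff two_ne_zero |>.1 ha

end Gram

theorem Function.Injective.exists_pos_le_abs_sub {ι : Type*} [Finite ι] {x : ι → ℝ}
    (hx : Function.Injective x) (i : ι) : ∃ ε > 0, ∀ j ≠ i, ε ≤ |x j - x i| := by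
  have hclosed : IsClosed (x '' {j | j ≠ i}) := (Set.toFinite _).isClosed
  have hmem : x i ∈ (x '' {j | j ≠ i})ᶜ := fun ⟨j, hj, hji⟩ => hj (hx hji)
  obtain ⟨ε, hε, hball⟩ := Metric.isOpen_iff.1 hclosed.isOpen_compl (x i) hmem
  refine ⟨ε, hε, fun j hj => not_lt.1 fun hlt => hball ?_ ⟨j, hj, rfl⟩⟩
  rwa [Metric.mem_ball, Real.dist_eq]

section StepHinge

variable {ι : Type*} [Fintype ι] {x a : ι → ℝ}

theorem eq_zero_of_dense_sum_step (hx : Function.Injective x)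
    (h : Dense {v | ∑ j, a j * (if v < x j then 1 else 0) = 0}) : a = 0 := by
  funext i
  obtain ⟨ε, hε, hgap⟩ := hx.exists_pos_le_abs_sub i
  obtain ⟨v, hv, hvi⟩ := h.exists_between (sub_lt_self (x i) hε)
  obtain ⟨w, hw, hwi⟩ := h.exists_between (lt_add_of_pos_right (x i) hε)
  have hdiff : ∑ j, a j * ((if v < x j then 1 else 0) - (if w < x j then 1 else 0)) = a i := by
    rw [Finset.sum_eq_single i (fun j _ hj => ?_) (by simp)]
    · simp [hvi.2, hwi.1.not_gt]
    · rcases le_abs'.1 (hgap j hj) with hlt | hgt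
      · simp [(show x j < v by linarith [hvi.1]).not_gt, (show x j < w by linarith [hwi.1]).not_gt]
      · simp [show v < x j by linarith [hvi.2], show w < x j by linarith [hwi.2]]
  rw [mem_ofPred_eq] at hv hw
  simp only [mul_sub, Finset.sum_sub_distrib, hv, hw, sub_zero] at hdiff
  exact hdiff.symm

theorem eq_zero_of_sum_hinge (hx : Function.Injective x)
    (h : ∀ v, ∑ j, a j * max 0 (x j - v) = 0) : a = 0 := by
  funext i
  obtain ⟨ε, hε, hgap⟩ := hx.exists_pos_le_abs_sub i
  have hdiff : ∑ j, a j * (max 0 (x j - (x i - ε)) - 2 * max 0 (x j - x i)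
      + max 0 (x j - (x i + ε))) = a i * ε := by
    rw [Finset.sum_eq_single i (fun j _ hj => ?_) (by simp)]
    · rw [max_eq_right (by linarith), sub_self, max_self, max_eq_left (by linarith)]
      ring
    · rcases le_abs'.1 (hgap j hj) with hlt | hgt
      · rw [max_eq_left (by linarith), max_eq_left (by linarith), max_eq_left (by linarith)]
        ring
      · rw [max_eq_right (by linarith), max_eq_right (by linarith), max_eq_right (by linarith)]
        ring
  simp only [mul_add, mul_sub, Finset.sum_add_distrib, Finset.sum_sub_distrib, h,
    mul_left_comm _ (2 : ℝ), ← Finset.mul_sum] at hdiff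
  simpa [hε.ne'] using hdiff.symm

end StepHinge

theorem cos_arctan_sub_arctan (x y : ℝ) :
    cos (arctan x - arctan y) = (1 + x * y) / (√(1 + x ^ 2) * √(1 + y ^ 2)) := by
  rw [cos_sub, cos_arctan, sin_arctan, cos_arctan, sin_arctan]
  field_simp

theorem sin_arctan_sub_arctan (x y : ℝ) :
    sin (arctan x - arctan y) = (x - y) / (√(1 + x ^ 2) * √(1 + y ^ 2)) := by
  rw [sin_sub, cos_arctan, sin_arctan, cos_arctan, sin_arctan]
  field_simp

theorem abs_arctan_sub_arctan_lt_pi (x y : ℝ) : |arctan x - arctan y| < π := by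
  have hx := arctan_mem_Ioo x
  have hy := arctan_mem_Ioo y
  rw [abs_sub_lt_iff]
  constructor <;> linarith [hx.1, hx.2, hy.1, hy.2]

theorem ntkPsi1_eq_abs_arctan_sub (x y : ℝ) : ntkPsi1 x y = |arctan x - arctan y| := by
  rw [ntkPsi1, sqrt_mul (by positivity), ← cos_arctan_sub_arctan, ← cos_abs]
  exact arccos_cos (abs_nonneg _) (abs_arctan_sub_arctan_lt_pi x y).le

noncomputable def dirInner (x φ : ℝ) : ℝ := cos φ + x * sin φ

theorem dirInner_eq (x φ : ℝ) : dirInner x φ = √(1 + x ^ 2) * cos (φ - arctan x) := by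
  rw [dirInner, cos_sub, cos_arctan, sin_arctan]
  field_simp

theorem dirInner_arctan_add_pi_div_two (x v : ℝ) :
    dirInner x (arctan v + π / 2) = cos (arctan v) * (x - v) := by
  rw [dirInner, cos_add_pi_div_two, sin_add_pi_div_two, sin_arctan, cos_arctan]
  ring

theorem cos_pos_iff_abs_lt {θ : ℝ} (hθ : |θ| < 3 * π / 2) : 0 < cos θ ↔ |θ| < π / 2 := by
  refine ⟨fun h => not_le.1 fun hle => h.not_ge ?_, fun h => cos_pos_of_mem_Ioo (abs_lt.1 h)⟩
  rw [← cos_abs]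
  exact cos_nonpos_of_pi_div_two_le_of_le hle (by linarith)

theorem dirInner_pos_iff {x φ : ℝ} (hφ : φ ∈ Ioc (-π) π) :
    0 < dirInner x φ ↔ φ ∈ Ioo (arctan x - π / 2) (arctan x + π / 2) := by
  have ht := arctan_mem_Ioo x
  rw [dirInner_eq, mul_pos_iff_of_pos_left (by positivity), cos_pos_iff_abs_lt, abs_lt, mem_Ioo]
  · constructor <;> rintro ⟨h1, h2⟩ <;> constructor <;> linarith
  · rw [abs_lt]; constructor <;> linarith [hφ.1, hφ.2, ht.1, ht.2]

theorem integral_cos_sub_mul_cos_sub (s t : ℝ) :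
    ∫ φ in (t - π / 2)..(s + π / 2), cos (φ - t) * cos (φ - s)
      = ((π - (t - s)) * cos (t - s) + sin (t - s)) / 2 := by
  have hderiv : ∀ φ, HasDerivAt (fun φ => (φ * cos (t - s) + sin (2 * φ - t - s) / 2) / 2)
      (cos (φ - t) * cos (φ - s)) φ := by
    intro φ
    refine ((((hasDerivAt_id φ).mul_const (cos (t - s))).add
      ((((hasDerivAt_id φ).const_mul 2).sub_const t |>.sub_const s).sin.div_const 2)).div_const
        2).congr_deriv ?_
    rw [id, show 2 * φ - t - s = (φ - t) + (φ - s) by ring,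
      show t - s = (φ - s) - (φ - t) by ring, cos_add, cos_sub]
    ring
  rw [intervalIntegral.integral_eq_sub_of_hasDerivAt (fun φ _ => hderiv φ)
    (by apply Continuous.intervalIntegrable; fun_prop)]
  rw [show 2 * (s + π / 2) - t - s = π - (t - s) by ring,
    show 2 * (t - π / 2) - t - s = -(π - (t - s)) by ring, sin_neg, sin_pi_sub]
  ring

theorem Ioo_arctan_subset_Ioc (x y : ℝ) :
    Ioo (arctan x - π / 2) (arctan y + π / 2) ⊆ Ioc (-π) π := fun φ hφ =>
  ⟨by linarith [hφ.1, (arctan_mem_Ioo x).1], by linarith [hφ.2, (arctan_mem_Ioo y).2]⟩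

-- The interval contains every `φ` where both factors can be nonzero, and is exactly that set
-- when `y ≤ x`.
theorem setIntegral_Ioc_comp_dirInner_mul {σ : ℝ → ℝ} (hσ : ∀ r ≤ 0, σ r = 0) (x y : ℝ) :
    ∫ φ in Ioc (-π) π, σ (dirInner x φ) * σ (dirInner y φ)
      = ∫ φ in Ioo (arctan x - π / 2) (arctan y + π / 2), σ (dirInner x φ) * σ (dirInner y φ) := by
  have hsupp : EqOn (fun φ => σ (dirInner x φ) * σ (dirInner y φ))
      ((Ioo (arctan x - π / 2) (arctan y + π / 2)).indicator
        fun φ => σ (dirInner x φ) * σ (dirInner y φ)) (Ioc (-π) π) := by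
    intro φ hφ
    by_cases hmem : φ ∈ Ioo (arctan x - π / 2) (arctan y + π / 2)
    · rw [indicator_of_mem hmem]
    rw [indicator_of_notMem hmem]
    have : dirInner x φ ≤ 0 ∨ dirInner y φ ≤ 0 := by
      by_contra! h
      exact hmem ⟨((dirInner_pos_iff hφ).1 h.1).1, ((dirInner_pos_iff hφ).1 h.2).2⟩
    rcases this with h | h <;> simp [hσ _ h]
  rw [setIntegral_congr_fun measurableSet_Ioc hsupp, setIntegral_indicator measurableSet_Ioo,
    inter_eq_right.2 (Ioo_arctan_subset_Ioc x y)]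

theorem dirInner_pos_of_mem_Ioo {x y φ : ℝ} (hyx : y ≤ x)
    (hφ : φ ∈ Ioo (arctan x - π / 2) (arctan y + π / 2)) :
    0 < dirInner x φ ∧ 0 < dirInner y φ := by
  have hst := arctan_strictMono.monotone hyx
  have hφ' := Ioo_arctan_subset_Ioc x y hφ
  exact ⟨(dirInner_pos_iff hφ').2 ⟨hφ.1, by linarith [hφ.2]⟩,
    (dirInner_pos_iff hφ').2 ⟨by linarith [hφ.1], hφ.2⟩⟩

theorem Pi0_comm (x y : ℝ) : Pi0 x y = Pi0 y x := by
  rw [Pi0, Pi0, ntkPsi1_eq_abs_arctan_sub, ntkPsi1_eq_abs_arctan_sub, abs_sub_comm]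

theorem Pi1_comm (x y : ℝ) : Pi1 x y = Pi1 y x := by
  rw [Pi1, Pi1, ntkPsi1_eq_abs_arctan_sub, ntkPsi1_eq_abs_arctan_sub, abs_sub_comm,
    abs_sub_comm x, mul_comm x]

theorem Pi0_eq_integral (x y : ℝ) :
    Pi0 x y = π⁻¹ * ∫ φ in Ioc (-π) π,
      (if 0 < dirInner x φ then 1 else 0) * (if 0 < dirInner y φ then 1 else 0) := by
  wlog hyx : y ≤ x
  · simpa only [Pi0_comm, mul_comm] using this y x (le_of_not_ge hyx)
  have hst := arctan_strictMono.monotone hyx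
  rw [setIntegral_Ioc_comp_dirInner_mul (fun r hr => if_neg hr.not_gt),
    setIntegral_congr_fun measurableSet_Ioo (g := fun _ => 1) fun φ hφ => by
      simp [dirInner_pos_of_mem_Ioo hyx hφ], setIntegral_const, Real.volume_real_Ioo_of_le
      (by linarith [(arctan_mem_Ioo x).2, (arctan_mem_Ioo y).1]),
    Pi0, ntkPsi1_eq_abs_arctan_sub, abs_of_nonneg (sub_nonneg.2 hst)]
  simp only [smul_eq_mul, mul_one]
  ring

theorem Pi1_eq_integral (x y : ℝ) :
    Pi1 x y = 2 / π * ∫ φ in Ioc (-π) π, max 0 (dirInner x φ) * max 0 (dirInner y φ) := by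
  wlog hyx : y ≤ x
  · simpa only [Pi1_comm, mul_comm] using this y x (le_of_not_ge hyx)
  have hst := arctan_strictMono.monotone hyx
  rw [setIntegral_Ioc_comp_dirInner_mul (fun r hr => max_eq_left hr),
    setIntegral_congr_fun measurableSet_Ioo (g := fun φ => √(1 + x ^ 2) * √(1 + y ^ 2) *
      (cos (φ - arctan x) * cos (φ - arctan y))) fun φ hφ => by
        rw [max_eq_right (dirInner_pos_of_mem_Ioo hyx hφ).1.le,
          max_eq_right (dirInner_pos_of_mem_Ioo hyx hφ).2.le, dirInner_eq, dirInner_eq]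
        ring,
    integral_const_mul, ← integral_Ioc_eq_integral_Ioo, ← intervalIntegral.integral_of_le
      (by linarith [(arctan_mem_Ioo x).2, (arctan_mem_Ioo y).1]),
    integral_cos_sub_mul_cos_sub, cos_arctan_sub_arctan, sin_arctan_sub_arctan,
    Pi1, ntkPsi1_eq_abs_arctan_sub, abs_of_nonneg (sub_nonneg.2 hst),
    abs_of_nonneg (sub_nonneg.2 hyx)]
  field_simp

section Independence

variable {ι : Type*} [Fintype ι] {x a : ι → ℝ}

theorem eq_zero_of_ae_sum_heaviside (hx : Function.Injective x)
    (h : ∀ᵐ φ ∂volume.restrict (Ioc (-π) π),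
      ∑ j, a j * (if 0 < dirInner (x j) φ then 1 else 0) = 0) : a = 0 := by
  refine eq_zero_of_dense_sum_step hx (dense_iff_exists_between.2 fun p q hpq => ?_)
  obtain ⟨φ, hφ, hpφ, hφq⟩ := (Measure.dense_of_ae (ae_imp_of_ae_restrict h)).exists_between
    (add_lt_add_right (arctan_strictMono hpq) (π / 2))
  have hp := arctan_mem_Ioo p
  have hq := arctan_mem_Ioo q
  have hsum := hφ ⟨by linarith [hp.1, pi_pos], by linarith [hq.2]⟩
  have hφv : arctan (tan (φ - π / 2)) + π / 2 = φ := by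
    rw [arctan_tan (by linarith [hp.1]) (by linarith [hq.2])]
    ring
  generalize tan (φ - π / 2) = v at hφv ⊢
  subst hφv
  refine ⟨v, ?_, arctan_strictMono.lt_iff_lt.1 (show arctan p < arctan v by linarith),
    arctan_strictMono.lt_iff_lt.1 (show arctan v < arctan q by linarith)⟩
  simpa only [mem_ofPred_eq, dirInner_arctan_add_pi_div_two,
    mul_pos_iff_of_pos_left (cos_arctan_pos _), sub_pos] using hsum

theorem eq_zero_of_ae_sum_relu (hx : Function.Injective x)
    (h : ∀ᵐ φ ∂volume.restrict (Ioc (-π) π), ∑ j, a j * max 0 (dirInner (x j) φ) = 0) :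
    a = 0 := by
  have hzero : EqOn (fun φ => ∑ j, a j * max 0 (dirInner (x j) φ)) 0 (Ioo (-π) π) :=
    Measure.eqOn_open_of_ae_eq (ae_restrict_of_ae_restrict_of_subset Ioo_subset_Ioc_self h)
      isOpen_Ioo (by unfold dirInner; fun_prop) continuousOn_const
  refine eq_zero_of_sum_hinge hx fun v => ?_
  have hv := arctan_mem_Ioo v
  have hc := cos_arctan_pos v
  have hsum := hzero (x := arctan v + π / 2) ⟨by linarith [hv.1, pi_pos], by linarith [hv.2]⟩
  have hrelu : ∀ j, max 0 (cos (arctan v) * (x j - v)) = cos (arctan v) * max 0 (x j - v) :=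
    fun j => by rw [mul_max_of_nonneg _ _ hc.le, mul_zero]
  simp only [dirInner_arctan_add_pi_div_two, hrelu, mul_left_comm (a _), ← Finset.mul_sum,
    Pi.zero_apply] at hsum
  exact (mul_eq_zero.1 hsum).resolve_left hc.ne'

end Independence

theorem integrable_heaviside_mul (x y : ℝ) :
    Integrable (fun φ => (if 0 < dirInner x φ then (1 : ℝ) else 0) *
      (if 0 < dirInner y φ then 1 else 0)) (volume.restrict (Ioc (-π) π)) := by
  have hmeas : ∀ z, Measurable fun φ => if 0 < dirInner z φ then (1 : ℝ) else 0 := fun z =>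
    Measurable.ite (measurableSet_lt measurable_const (by unfold dirInner; fun_prop))
      measurable_const measurable_const
  refine Integrable.of_bound ((hmeas x).mul (hmeas y)).aestronglyMeasurable 1
    (ae_of_all _ fun φ => ?_)
  split_ifs <;> simp

theorem integrable_relu_mul (x y : ℝ) :
    Integrable (fun φ => max 0 (dirInner x φ) * max 0 (dirInner y φ))
      (volume.restrict (Ioc (-π) π)) :=
  Continuous.integrableOn_Ioc (by unfold dirInner; fun_prop)

theorem Pi0_Pi1_gram_posDef_general (n : ℕ) (x : Fin n → ℝ) (hx : Function.Injective x) :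
    (Matrix.of fun i j => Pi0 (x i) (x j)).PosDef ∧
    (Matrix.of fun i j => Pi1 (x i) (x j)).PosDef := by
  constructor
  · have hgram := posDef_of_integral_mul (fun i j => integrable_heaviside_mul (x i) (x j))
      fun c => eq_zero_of_ae_sum_heaviside hx
    convert hgram.smul (inv_pos.2 pi_pos) using 1
    ext i j
    simp [Pi0_eq_integral]
  · have hgram := posDef_of_integral_mul (fun i j => integrable_relu_mul (x i) (x j))
      fun c => eq_zero_of_ae_sum_relu hx
    convert hgram.smul (div_pos two_pos pi_pos) using 1
    ext i j
    simp [Pi1_eq_integral]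

/-- **Positive definiteness of `Π₀` and `Π₁` on `[0,1]`.**  For pairwise distinct points
`x₁,…,xₙ ∈ [0,1]`, the Gram matrices of `Π₀` and `Π₁` are positive definite. -/
theorem Pi0_Pi1_gram_posDef (n : ℕ) (x : Fin n → ℝ) (hx : Function.Injective x)
    (hX : ∀ i, x i ∈ Set.Icc (0 : ℝ) 1) :
    (Matrix.of fun i j => Pi0 (x i) (x j)).PosDef ∧
    (Matrix.of fun i j => Pi1 (x i) (x j)).PosDef :=
  Pi0_Pi1_gram_posDef_general n x hx
end

section
/- Let α ≥ 1 and suppose λ ≠ 0 and f : [0,1] → ℝ is continuous, not identically zero, and satisfies λ f(x) = ∫₀¹ G_α(x,x') f(x') dx' for all x ∈ [0,1]. Then λ > 0, f is twice differentiable on (0,1) with λ f''(x) = −(2/π) f(x) for all x ∈ (0,1), and the number ω := √(2/(πλ)) satisfies 2 + 2cos(ω) + ω·sin(ω)·(1 − 2απ) = 0. -/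
/-!
Splitting `∫₀¹ |x - y| f(y) dy` at `y = x` writes the eigen-equation through primitives of `f`
and `y f(y)`, so `f` is differentiable with `π λ f'(x) = ∫₀¹ f - 2 ∫₀ˣ f`.
Hence `λ f'' = -(2/π) f`, with boundary conditions `f'(1) = -f'(0)` and
`f(0) + f(1) = (2απ - 1) f'(0)`. Integrating `(f f')' = f'² - k f²`, `k = 2/(πλ)`, over `[0,1]`
gives `k ∫ f² = ∫ f'² + (2απ - 1) f'(0)² ≥ 0`, so `λ > 0`. With `ω = √k` the conserved energy
`f'² + ω² f²` of the difference shows `f = a cos ωx + b sin ωx`, and the two boundary conditions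
are a linear system for `(a, b) ≠ 0` whose solvability is the stated equation.
-/

open Real MeasureTheory

open Set

section IntegralAbsSub

variable {f : ℝ → ℝ} {a b x : ℝ}

theorem ContinuousOn.intervalIntegrable_of_mem_Icc {c d : ℝ} (hf : ContinuousOn f (Icc a b))
    (hc : c ∈ Icc a b) (hd : d ∈ Icc a b) : IntervalIntegrable f volume c d :=
  (hf.mono (uIcc_subset_Icc hc hd)).intervalIntegrable

theorem ContinuousOn.integral_hasDerivWithinAt_Icc (hf : ContinuousOn f (Icc a b))
    (hx : x ∈ Icc a b) : HasDerivWithinAt (fun t => ∫ y in a..t, f y) (f x) (Icc a b) x := by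
  have : Fact (x ∈ Icc a b) := ⟨hx⟩
  exact intervalIntegral.integral_hasDerivWithinAt_right
    (hf.intervalIntegrable_of_mem_Icc (left_mem_Icc.2 (hx.1.trans hx.2)) hx)
    (hf.stronglyMeasurableAtFilter_nhdsWithin measurableSet_Icc x) (hf x hx)

theorem integral_abs_sub_mul (hf : ContinuousOn f (Icc a b)) (hx : x ∈ Icc a b) :
    ∫ y in a..b, |x - y| * f y =
      2 * (∫ y in a..x, (x - y) * f y) + ∫ y in a..b, (y - x) * f y := by
  have hint {c d : ℝ} (hc : c ∈ Icc a b) (hd : d ∈ Icc a b) {g : ℝ → ℝ} (hg : Continuous g) :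
      IntervalIntegrable (fun y => g y * f y) volume c d :=
    (hg.continuousOn.mul hf).intervalIntegrable_of_mem_Icc hc hd
  have ha : a ∈ Icc a b := left_mem_Icc.2 (hx.1.trans hx.2)
  have hb : b ∈ Icc a b := right_mem_Icc.2 (hx.1.trans hx.2)
  have hleft : ∫ y in a..x, |x - y| * f y = ∫ y in a..x, (x - y) * f y :=
    intervalIntegral.integral_congr fun y hy => by
      rw [uIcc_of_le hx.1] at hy
      simp only [abs_of_nonneg (sub_nonneg.2 hy.2)]
  have hright : ∫ y in x..b, |x - y| * f y = ∫ y in x..b, (y - x) * f y :=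
    intervalIntegral.integral_congr fun y hy => by
      rw [uIcc_of_le hx.2] at hy
      simp only [abs_sub_comm x y, abs_of_nonneg (sub_nonneg.2 hy.1)]
  have hneg : ∫ y in a..x, (y - x) * f y = -∫ y in a..x, (x - y) * f y := by
    rw [← intervalIntegral.integral_neg]
    congr 1 with y
    ring
  have hsplit {g : ℝ → ℝ} (hg : Continuous g) :
      ∫ y in a..b, g y * f y = (∫ y in a..x, g y * f y) + ∫ y in x..b, g y * f y :=
    (intervalIntegral.integral_add_adjacent_intervals (hint ha hx hg) (hint hx hb hg)).symm
  rw [hsplit (g := fun y => |x - y|) (by fun_prop), hsplit (g := fun y => y - x) (by fun_prop),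
    hleft, hright, hneg]
  ring

theorem hasDerivWithinAt_integral_abs_sub_mul (hf : ContinuousOn f (Icc a b))
    (hx : x ∈ Icc a b) :
    HasDerivWithinAt (fun t => ∫ y in a..b, |t - y| * f y)
      (2 * (∫ y in a..x, f y) - ∫ y in a..b, f y) (Icc a b) x := by
  have ha : a ∈ Icc a b := left_mem_Icc.2 (hx.1.trans hx.2)
  have hb : b ∈ Icc a b := right_mem_Icc.2 (hx.1.trans hx.2)
  have hyf : ContinuousOn (fun y => y * f y) (Icc a b) := continuousOn_id.mul hf
  set U : ℝ → ℝ := fun t => ∫ y in a..t, f y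
  set V : ℝ → ℝ := fun t => ∫ y in a..t, y * f y
  have hexpand : ∀ t ∈ Icc a b,
      ∫ y in a..b, |t - y| * f y = 2 * (t * U t - V t) + (V b - t * U b) := fun t ht => by
    have hlin {c : ℝ} (hc : c ∈ Icc a b) (r s : ℝ) :
        ∫ y in a..c, (r * y + s) * f y = r * V c + s * U c := by
      simp only [add_mul, mul_assoc, U, V]
      rw [intervalIntegral.integral_add ((hyf.intervalIntegrable_of_mem_Icc ha hc).const_mul r)
        ((hf.intervalIntegrable_of_mem_Icc ha hc).const_mul s),
        intervalIntegral.integral_const_mul, intervalIntegral.integral_const_mul]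
    have h₁ := hlin ht (-1) t
    have h₂ := hlin hb 1 (-t)
    simp only [neg_one_mul, one_mul, ← sub_eq_neg_add, ← sub_eq_add_neg] at h₁ h₂
    rw [integral_abs_sub_mul hf ht, h₁, h₂]
    ring
  have hderiv : HasDerivWithinAt (fun t => 2 * (t * U t - V t) + (V b - t * U b))
      (2 * U x - U b) (Icc a b) x := by
    refine ((((hasDerivWithinAt_id x _).mul (hf.integral_hasDerivWithinAt_Icc hx)).sub
      (hyf.integral_hasDerivWithinAt_Icc hx)).const_mul 2).add
      (((hasDerivWithinAt_id x _).mul_const (U b)).const_sub (V b)) |>.congr_deriv ?_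
    simp only [id]
    ring
  exact hderiv.congr (fun t ht => hexpand t ht) (hexpand x hx)

end IntegralAbsSub

section KernelG

variable {α lam : ℝ} {f : ℝ → ℝ}

def KernelGEigenEq (α lam : ℝ) (f : ℝ → ℝ) : Prop :=
  ∀ x ∈ Icc (0 : ℝ) 1, lam * f x = ∫ y in Icc (0 : ℝ) 1, kernelG α x y * f y

theorem setIntegral_kernelG_mul (hf : ContinuousOn f (Icc 0 1)) (x : ℝ) :
    ∫ y in Icc (0 : ℝ) 1, kernelG α x y * f y =
      α * (∫ y in (0 : ℝ)..1, f y) - (∫ y in (0 : ℝ)..1, |x - y| * f y) / π := by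
  have hint {g : ℝ → ℝ} (hg : Continuous g) : IntervalIntegrable (fun y => g y * f y) volume 0 1 :=
    (hg.continuousOn.mul hf).intervalIntegrable_of_Icc zero_le_one
  rw [integral_Icc_eq_integral_Ioc, ← intervalIntegral.integral_of_le zero_le_one]
  simp only [kernelG, sub_mul, div_mul_eq_mul_div]
  rw [intervalIntegral.integral_sub (hint continuous_const) ((hint (by fun_prop)).div_const π),
    intervalIntegral.integral_const_mul, intervalIntegral.integral_div]

theorem KernelGEigenEq.hasDerivWithinAt (heig : KernelGEigenEq α lam f) (hlam : lam ≠ 0)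
    (hf : ContinuousOn f (Icc 0 1)) {x : ℝ} (hx : x ∈ Icc (0 : ℝ) 1) :
    HasDerivWithinAt f (((∫ y in (0 : ℝ)..1, f y) - 2 * ∫ y in (0 : ℝ)..x, f y) / (π * lam))
      (Icc 0 1) x := by
  have hf_eq : ∀ t ∈ Icc (0 : ℝ) 1,
      f t = (α * (∫ y in (0 : ℝ)..1, f y) - (∫ y in (0 : ℝ)..1, |t - y| * f y) / π) / lam :=
    fun t ht => by rw [← setIntegral_kernelG_mul hf, ← heig t ht, mul_div_cancel_left₀ _ hlam]
  refine ((((hasDerivWithinAt_integral_abs_sub_mul hf hx).div_const π).const_sub _).div_const lam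
    |>.congr hf_eq (hf_eq x hx)).congr_deriv ?_
  field_simp
  ring

theorem KernelGEigenEq.mul_add_boundary (heig : KernelGEigenEq α lam f)
    (hf : ContinuousOn f (Icc 0 1)) :
    lam * (f 0 + f 1) = (2 * α - 1 / π) * ∫ y in (0 : ℝ)..1, f y := by
  have hint (x : ℝ) : IntervalIntegrable (fun y => |x - y| * f y) volume 0 1 :=
    ((by fun_prop : Continuous fun y => |x - y|).continuousOn.mul hf).intervalIntegrable_of_Icc
      zero_le_one
  have hsum : (∫ y in (0 : ℝ)..1, |0 - y| * f y) + ∫ y in (0 : ℝ)..1, |1 - y| * f y =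
      ∫ y in (0 : ℝ)..1, f y := by
    rw [← intervalIntegral.integral_add (hint 0) (hint 1)]
    refine intervalIntegral.integral_congr fun y hy => ?_
    rw [uIcc_of_le zero_le_one] at hy
    simp only [abs_of_nonpos (by linarith [hy.1] : 0 - y ≤ 0),
      abs_of_nonneg (by linarith [hy.2] : 0 ≤ 1 - y)]
    ring
  rw [mul_add, heig 0 (left_mem_Icc.2 zero_le_one), heig 1 (right_mem_Icc.2 zero_le_one),
    setIntegral_kernelG_mul hf, setIntegral_kernelG_mul hf, ← hsum]
  ring

theorem KernelGEigenEq.exists_boundaryValueProblem (heig : KernelGEigenEq α lam f)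
    (hlam : lam ≠ 0) (hf : ContinuousOn f (Icc 0 1)) :
    ∃ f' : ℝ → ℝ, (∀ x ∈ Icc (0 : ℝ) 1, HasDerivWithinAt f (f' x) (Icc 0 1) x) ∧
      (∀ x ∈ Icc (0 : ℝ) 1, HasDerivWithinAt f' (-(2 / (π * lam)) * f x) (Icc 0 1) x) ∧
      f' 1 = -f' 0 ∧ f 0 + f 1 = (2 * α * π - 1) * f' 0 := by
  set U := ∫ y in (0 : ℝ)..1, f y
  refine ⟨fun x => (U - 2 * ∫ y in (0 : ℝ)..x, f y) / (π * lam),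
    fun x hx => heig.hasDerivWithinAt hlam hf hx, fun x hx => ?_, ?_, ?_⟩
  · exact (((hf.integral_hasDerivWithinAt_Icc hx).const_mul 2).const_sub U).div_const (π * lam)
      |>.congr_deriv (by ring)
  · simp only [intervalIntegral.integral_same]
    ring
  · rw [← mul_right_inj' hlam, heig.mul_add_boundary hf]
    simp only [intervalIntegral.integral_same]
    field_simp
    ring

end KernelG

section SecondOrderLinear

variable {f f' : ℝ → ℝ} {a b k : ℝ}

theorem eq_zero_of_deriv_deriv_eq_neg_mul (hk : 0 < k)
    (hf : ∀ x ∈ Icc a b, HasDerivWithinAt f (f' x) (Icc a b) x)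
    (hf' : ∀ x ∈ Icc a b, HasDerivWithinAt f' (-k * f x) (Icc a b) x)
    (ha : f a = 0) (ha' : f' a = 0) {x : ℝ} (hx : x ∈ Icc a b) : f x = 0 ∧ f' x = 0 := by
  set E : ℝ → ℝ := fun t => f' t ^ 2 + k * f t ^ 2
  have hE : ∀ t ∈ Icc a b, HasDerivWithinAt E 0 (Icc a b) t := fun t ht => by
    refine (((hf' t ht).pow 2).add (((hf t ht).pow 2).const_mul k)).congr_deriv ?_
    push_cast
    ring
  have hE_const := constant_of_has_deriv_right_zero (fun t ht => (hE t ht).continuousWithinAt)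
    (fun t ht => (hE t (Ico_subset_Icc_self ht)).mono_of_mem_nhdsWithin
      (Icc_mem_nhdsGE_of_mem ht)) x hx
  simp only [E, ha, ha'] at hE_const
  have hkf : k * f x ^ 2 = 0 := by
    nlinarith [sq_nonneg (f' x), mul_nonneg hk.le (sq_nonneg (f x))]
  exact ⟨pow_eq_zero_iff two_ne_zero |>.1 ((mul_eq_zero.1 hkf).resolve_left hk.ne'),
    pow_eq_zero_iff two_ne_zero |>.1 (by linarith)⟩

theorem eq_cos_sin_of_deriv_deriv_eq_neg_sq_mul {ω c d : ℝ} (hω : ω ≠ 0)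
    (hf : ∀ x ∈ Icc 0 b, HasDerivWithinAt f (f' x) (Icc 0 b) x)
    (hf' : ∀ x ∈ Icc 0 b, HasDerivWithinAt f' (-ω ^ 2 * f x) (Icc 0 b) x)
    (h0 : f 0 = c) (h0' : f' 0 = d * ω) {x : ℝ} (hx : x ∈ Icc 0 b) :
    f x = c * cos (ω * x) + d * sin (ω * x) ∧
      f' x = ω * (d * cos (ω * x) - c * sin (ω * x)) := by
  set T : ℝ → ℝ := fun t => c * cos (ω * t) + d * sin (ω * t)
  set T' : ℝ → ℝ := fun t => ω * (d * cos (ω * t) - c * sin (ω * t))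
  have hlin (t : ℝ) : HasDerivAt (fun s => ω * s) ω t := by
    simpa using (hasDerivAt_id t).const_mul ω
  have hT (t : ℝ) : HasDerivAt T (T' t) t := by
    refine (((hlin t).cos.const_mul c).add ((hlin t).sin.const_mul d)).congr_deriv ?_
    ring
  have hT' (t : ℝ) : HasDerivAt T' (-ω ^ 2 * T t) t := by
    refine (((hlin t).cos.const_mul d).sub ((hlin t).sin.const_mul c)).const_mul ω
      |>.congr_deriv ?_
    ring
  have key := eq_zero_of_deriv_deriv_eq_neg_mul (k := ω ^ 2) (f := f - T) (f' := f' - T')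
    (by positivity) (fun t ht => (hf t ht).sub (hT t).hasDerivWithinAt)
    (fun t ht => ((hf' t ht).sub (hT' t).hasDerivWithinAt).congr_deriv
      (by simp only [Pi.sub_apply]; ring))
    (by simp [T, h0]) (by simp [T', h0']; ring) hx
  simpa only [Pi.sub_apply, sub_eq_zero] using key

theorem nonneg_of_deriv_deriv_eq_neg_mul (hab : a < b)
    (hf : ∀ x ∈ Icc a b, HasDerivWithinAt f (f' x) (Icc a b) x)
    (hf' : ∀ x ∈ Icc a b, HasDerivWithinAt f' (-k * f x) (Icc a b) x)
    (hne : ∃ x ∈ Icc a b, f x ≠ 0) (hbd : f b * f' b ≤ f a * f' a) : 0 ≤ k := by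
  have hfc : ContinuousOn f (Icc a b) := fun x hx => (hf x hx).continuousWithinAt
  have hf'c : ContinuousOn f' (Icc a b) := fun x hx => (hf' x hx).continuousWithinAt
  have hint {g : ℝ → ℝ} (hg : ContinuousOn g (Icc a b)) : IntervalIntegrable g volume a b :=
    hg.intervalIntegrable_of_Icc hab.le
  have hibp : ∫ x in a..b, (f' x ^ 2 - k * f x ^ 2) = f b * f' b - f a * f' a := by
    refine intervalIntegral.integral_eq_sub_of_hasDeriv_right_of_le hab.le (hfc.mul hf'c)
      (fun x hx => ?_) (hint ((hf'c.pow 2).sub (continuousOn_const.mul (hfc.pow 2))))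
    have hIcc : Icc a b ∈ nhds x := Icc_mem_nhds hx.1 hx.2
    refine (((hf x (Ioo_subset_Icc_self hx)).hasDerivAt hIcc).mul
      ((hf' x (Ioo_subset_Icc_self hx)).hasDerivAt hIcc)).hasDerivWithinAt.congr_deriv ?_
    ring
  rw [intervalIntegral.integral_sub (f := fun x => f' x ^ 2) (g := fun x => k * f x ^ 2)
    (hint (hf'c.pow 2)) (hint (continuousOn_const.mul (hfc.pow 2))),
    intervalIntegral.integral_const_mul] at hibp
  have hf'2 : 0 ≤ ∫ x in a..b, f' x ^ 2 :=
    intervalIntegral.integral_nonneg hab.le fun x _ => sq_nonneg _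
  have hf2 : 0 < ∫ x in a..b, f x ^ 2 := by
    obtain ⟨c, hc, hfc0⟩ := hne
    simpa using intervalIntegral.integral_lt_integral_of_continuousOn_of_le_of_exists_lt hab
      continuousOn_const (hfc.pow 2) (fun x _ => sq_nonneg (f x))
      ⟨c, hc, show (0 : ℝ) < f c ^ 2 by positivity⟩
  nlinarith

theorem two_add_two_mul_cos_eq {ω c p q : ℝ} (hpq : p ≠ 0 ∨ q ≠ 0)
    (h₁ : q * (1 + cos ω) = p * sin ω) (h₂ : p * (1 + cos ω) + q * sin ω = c * ω * q) :
    2 + 2 * cos ω = c * ω * sin ω := by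
  by_cases hq : q = 0
  · have hp : p ≠ 0 := hpq.resolve_right (not_not.2 hq)
    subst hq
    have hsin : sin ω = 0 := (mul_eq_zero.1 (by linear_combination -h₁)).resolve_left hp
    have hcos : 1 + cos ω = 0 := (mul_eq_zero.1 (by linear_combination h₂)).resolve_left hp
    linear_combination 2 * hcos - c * ω * hsin
  · refine mul_left_cancel₀ hq ?_
    linear_combination sin ω * h₂ + (1 + cos ω) * h₁ - q * sin_sq_add_cos_sq ω

theorem two_add_two_mul_cos_eq_of_boundary {ω c : ℝ} (hω : ω ≠ 0)
    (hf : ∀ x ∈ Icc (0 : ℝ) 1, HasDerivWithinAt f (f' x) (Icc 0 1) x)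
    (hf' : ∀ x ∈ Icc (0 : ℝ) 1, HasDerivWithinAt f' (-ω ^ 2 * f x) (Icc 0 1) x)
    (hne : ∃ x ∈ Icc (0 : ℝ) 1, f x ≠ 0) (hbc₁ : f' 1 = -f' 0) (hbc₂ : f 0 + f 1 = c * f' 0) :
    2 + 2 * cos ω = c * ω * sin ω := by
  obtain ⟨q, hq⟩ : ∃ q, f' 0 = q * ω := ⟨f' 0 / ω, by field_simp⟩
  have hsol {x : ℝ} (hx : x ∈ Icc (0 : ℝ) 1) :=
    eq_cos_sin_of_deriv_deriv_eq_neg_sq_mul hω hf hf' rfl hq hx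
  have hpq : f 0 ≠ 0 ∨ q ≠ 0 := by
    by_contra! h0
    obtain ⟨x, hx, hfx⟩ := hne
    simp [(hsol hx).1, h0] at hfx
  obtain ⟨hf1, hf'1⟩ := hsol (right_mem_Icc.2 zero_le_one)
  rw [mul_one] at hf1 hf'1
  refine two_add_two_mul_cos_eq hpq (mul_left_cancel₀ hω ?_) ?_
  · linear_combination -hf'1 + hbc₁ - hq
  · linear_combination hbc₂ - hf1 + c * hq

end SecondOrderLinear

/-- **Eigenfunctions of the `G_α` integral operator.**  If `λ ≠ 0` and a continuous,
not-identically-zero `f` satisfies `λ f(x) = ∫₀¹ G_α(x,y) f(y) dy` on `[0,1]`, then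
`λ > 0`, `f` is twice differentiable on `(0,1)` with `λ f'' = −(2/π) f` there, and
`ω := √(2/(πλ))` satisfies `2 + 2cos(ω) + ω sin(ω)(1 − 2απ) = 0`. -/
theorem kernelG_eigenfunction_ode (α : ℝ) (hα : 1 ≤ α) (lam : ℝ) (f : ℝ → ℝ)
    (hlam : lam ≠ 0) (hf : ContinuousOn f (Set.Icc (0 : ℝ) 1))
    (hne : ∃ x ∈ Set.Icc (0 : ℝ) 1, f x ≠ 0)
    (heig : ∀ x ∈ Set.Icc (0 : ℝ) 1,
      lam * f x = ∫ y in Set.Icc (0 : ℝ) 1, kernelG α x y * f y) :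
    0 < lam ∧
    (∃ f' f'' : ℝ → ℝ, ∀ x ∈ Set.Ioo (0 : ℝ) 1,
      HasDerivWithinAt f (f' x) (Set.Ioo (0 : ℝ) 1) x ∧
      HasDerivWithinAt f' (f'' x) (Set.Ioo (0 : ℝ) 1) x ∧
      lam * f'' x = -(2 / π) * f x) ∧
    (2 + 2 * Real.cos (Real.sqrt (2 / (π * lam))) +
      Real.sqrt (2 / (π * lam)) * Real.sin (Real.sqrt (2 / (π * lam))) * (1 - 2 * α * π)
      = 0) := by
  obtain ⟨f', hf', hf'', hbc₁, hbc₂⟩ := KernelGEigenEq.exists_boundaryValueProblem heig hlam hf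
  have hlam_pos : 0 < lam := by
    have hc : 0 ≤ 2 * α * π - 1 := by nlinarith [pi_gt_three]
    have hk : 0 ≤ 2 / (π * lam) := nonneg_of_deriv_deriv_eq_neg_mul zero_lt_one hf' hf'' hne
      (by linear_combination (-f' 0) * hbc₂ + f 1 * hbc₁ + mul_nonneg hc (sq_nonneg (f' 0)))
    by_contra! hle
    linarith [div_neg_of_pos_of_neg two_pos (mul_neg_of_pos_of_neg pi_pos (hle.lt_of_ne hlam))]
  have hk : 0 < 2 / (π * lam) := by positivity
  refine ⟨hlam_pos, ⟨f', fun x => -(2 / (π * lam)) * f x, fun x hx =>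
    ⟨(hf' x (Ioo_subset_Icc_self hx)).mono Ioo_subset_Icc_self,
      (hf'' x (Ioo_subset_Icc_self hx)).mono Ioo_subset_Icc_self, by field_simp⟩⟩, ?_⟩
  linear_combination two_add_two_mul_cos_eq_of_boundary (sqrt_pos.2 hk).ne' hf'
    (by rwa [sq_sqrt hk.le]) hne hbc₁ hbc₂
end

section
/- Fix d ≥ 1 and B > 0. There exists a constant C₆ > 0 depending only on d and B such that for all x', z, z' ∈ [−B,B]^d and all ε₀ > 0 with ‖x' − z'‖₂ ≤ ε₀, one has |ψ(z,z') − ψ(z,x')| ≤ C₆ · max{√ε₀, ε₀^{1/4}}, where ψ(x,x') = arccos((⟨x,x'⟩ + 1)/√((‖x‖₂² + 1)(‖x'‖₂² + 1))). -/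
open Real
open scoped RealInnerProductSpace

lemma arccos_anti' {a b : ℝ} (ha : -1 ≤ a) (hb : b ≤ 1) (hab : a ≤ b) :
    Real.arccos b ≤ Real.arccos a :=
  Real.strictAntiOn_arccos.antitoneOn ⟨ha, hab.trans hb⟩ ⟨ha.trans hab, hb⟩ hab

lemma arccos_sub_le_of_le {a b : ℝ} (ha : -1 ≤ a) (hb : b ≤ 1) (hab : a ≤ b) :
    Real.arccos a - Real.arccos b ≤ π * Real.sqrt (b - a) := by
  set θ₁ := Real.arccos b with hθ₁
  set θ₂ := Real.arccos a with hθ₂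
  have hθ₁0 : 0 ≤ θ₁ := Real.arccos_nonneg b
  have hθ₂0 : 0 ≤ θ₂ := Real.arccos_nonneg a
  have hθ₁π : θ₁ ≤ π := Real.arccos_le_pi b
  have hθ₂π : θ₂ ≤ π := Real.arccos_le_pi a
  have hθle : θ₁ ≤ θ₂ := arccos_anti' ha hb hab
  have hcos1 : Real.cos θ₁ = b := Real.cos_arccos (le_trans ha hab) hb
  have hcos2 : Real.cos θ₂ = a := Real.cos_arccos ha (le_trans hab hb)
  set t := (θ₂ - θ₁) / 2 with htdef
  set s := (θ₁ + θ₂) / 2 with hsdef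
  have ht0 : 0 ≤ t := by simp only [htdef]; linarith
  have ht2 : t ≤ π / 2 := by simp only [htdef]; linarith
  have hkey : b - a = 2 * Real.sin s * Real.sin t := by
    rw [← hcos1, ← hcos2, Real.cos_sub_cos]
    have h1 : (θ₁ - θ₂) / 2 = -t := by rw [htdef]; ring
    have h2 : (θ₁ + θ₂) / 2 = s := rfl
    rw [h1, h2, Real.sin_neg]; ring
  have hπ : 0 < π := Real.pi_pos
  have hst : Real.sin t ≤ Real.sin s := by
    rcases le_or_gt s (π / 2) with h | h
    · exact Real.sin_le_sin_of_le_of_le_pi_div_two (by linarith) h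
        (by simp only [htdef, hsdef]; linarith)
    · rw [← Real.sin_pi_sub s]
      exact Real.sin_le_sin_of_le_of_le_pi_div_two (by linarith) (by linarith)
        (by simp only [htdef, hsdef]; linarith)
  have hjordan : 2 / π * t ≤ Real.sin t := Real.mul_le_sin ht0 ht2
  have htnn : 0 ≤ Real.sin t := le_trans (by positivity) hjordan
  have hsq : ((θ₂ - θ₁) / π) ^ 2 ≤ b - a := by
    have h1 : (2 / π * t) * (2 / π * t) ≤ Real.sin t * Real.sin t :=
      mul_self_le_mul_self (by positivity) hjordan
    have h2 : Real.sin t * Real.sin t ≤ Real.sin s * Real.sin t :=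
      mul_le_mul_of_nonneg_right hst htnn
    rw [hkey]
    calc ((θ₂ - θ₁) / π) ^ 2 = (2 / π * t) * (2 / π * t) := by
          rw [htdef]; field_simp
      _ ≤ Real.sin t * Real.sin t := h1
      _ ≤ Real.sin s * Real.sin t := h2
      _ ≤ 2 * Real.sin s * Real.sin t := by
          nlinarith [mul_nonneg (htnn.trans hst) htnn]
  have h3 := Real.sqrt_le_sqrt hsq
  rw [Real.sqrt_sq_eq_abs, abs_of_nonneg
    (div_nonneg (by linarith) hπ.le)] at h3
  have h4 := (div_le_iff₀ hπ).mp h3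
  linarith [h4]

lemma arccos_hoelder {a b : ℝ} (ha : a ∈ Set.Icc (-1:ℝ) 1) (hb : b ∈ Set.Icc (-1:ℝ) 1) :
    |Real.arccos a - Real.arccos b| ≤ π * Real.sqrt |a - b| := by
  rcases le_total a b with h | h
  · rw [abs_of_nonneg (by linarith [arccos_anti' ha.1 hb.2 h] :
      (0:ℝ) ≤ Real.arccos a - Real.arccos b), abs_sub_comm, abs_of_nonneg (by linarith)]
    exact arccos_sub_le_of_le ha.1 hb.2 h
  · rw [abs_sub_comm, abs_of_nonneg (by linarith [arccos_anti' hb.1 ha.2 h] :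
      (0:ℝ) ≤ Real.arccos b - Real.arccos a), abs_of_nonneg (by linarith)]
    exact arccos_sub_le_of_le hb.1 ha.2 h

section aux
variable {E : Type*} [NormedAddCommGroup E] [InnerProductSpace ℝ E]

lemma cs_plus_one (x y : E) :
    |⟪x, y⟫ + 1| ≤ Real.sqrt ((‖x‖ ^ 2 + 1) * (‖y‖ ^ 2 + 1)) := by
  have hca := abs_real_inner_le_norm x y
  have h1 : (⟪x, y⟫ + 1) ^ 2 ≤ (‖x‖ ^ 2 + 1) * (‖y‖ ^ 2 + 1) := by
    have h2 := abs_le.mp hca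
    nlinarith [sq_nonneg (‖x‖ - ‖y‖), sq_nonneg (⟪x, y⟫ : ℝ), norm_nonneg x, norm_nonneg y]
  calc |⟪x, y⟫ + 1| = Real.sqrt ((⟪x, y⟫ + 1) ^ 2) := (Real.sqrt_sq_eq_abs _).symm
    _ ≤ _ := Real.sqrt_le_sqrt h1

lemma one_le_D (x y : E) : 1 ≤ Real.sqrt ((‖x‖ ^ 2 + 1) * (‖y‖ ^ 2 + 1)) := by
  rw [Real.one_le_sqrt]
  nlinarith [sq_nonneg ‖x‖, sq_nonneg ‖y‖]

lemma ratio_mem (x y : E) :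
    (⟪x, y⟫ + 1) / Real.sqrt ((‖x‖ ^ 2 + 1) * (‖y‖ ^ 2 + 1)) ∈ Set.Icc (-1:ℝ) 1 := by
  have hD := one_le_D x y
  have h := cs_plus_one x y
  rw [Set.mem_Icc, ← abs_le, abs_div, abs_of_nonneg (by linarith : (0:ℝ) ≤ Real.sqrt _)]
  exact div_le_one_of_le₀ h (by linarith)

end aux

lemma norm_le_of_coords {d : ℕ} {B : ℝ} (hB : 0 ≤ B) (y : EuclideanSpace ℝ (Fin d))
    (hy : ∀ i, y i ∈ Set.Icc (-B) B) : ‖y‖ ≤ B * Real.sqrt d := by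
  rw [EuclideanSpace.norm_eq]
  have hsum : ∑ i, ‖y i‖ ^ 2 ≤ ∑ _i : Fin d, B ^ 2 := by
    refine Finset.sum_le_sum fun i _ => ?_
    have h := hy i
    rw [Real.norm_eq_abs, sq_abs]
    nlinarith [h.1, h.2]
  calc Real.sqrt (∑ i, ‖y i‖ ^ 2) ≤ Real.sqrt (∑ _i : Fin d, B ^ 2) :=
        Real.sqrt_le_sqrt hsum
    _ = B * Real.sqrt d := by
        rw [Finset.sum_const, Finset.card_univ, Fintype.card_fin, nsmul_eq_mul,
          Real.sqrt_mul (by positivity), Real.sqrt_sq hB]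
        ring

set_option maxHeartbeats 1000000 in
/-- **Hölder-type continuity of `ψ`.**  For fixed `d ≥ 1` and `B > 0`, there is a constant
`C₆ > 0` depending only on `d` and `B` such that for all `x', z, z' ∈ [−B,B]^d` and `ε₀ > 0`
with `‖x' − z'‖₂ ≤ ε₀`, one has `|ψ(z,z') − ψ(z,x')| ≤ C₆ · max{√ε₀, ε₀^{1/4}}`. -/
theorem ntkPsi_continuity (d : ℕ) (hd : 1 ≤ d) (B : ℝ) (hB : 0 < B) :
    ∃ C₆ : ℝ, 0 < C₆ ∧
      ∀ (x' z z' : EuclideanSpace ℝ (Fin d)),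
        (∀ i, x' i ∈ Set.Icc (-B) B) →
        (∀ i, z i ∈ Set.Icc (-B) B) →
        (∀ i, z' i ∈ Set.Icc (-B) B) →
        ∀ ε₀ : ℝ, 0 < ε₀ → ‖x' - z'‖ ≤ ε₀ →
          |ntkPsi d z z' - ntkPsi d z x'| ≤
            C₆ * max (Real.sqrt ε₀) (ε₀ ^ ((1 : ℝ) / 4)) := by
  set R : ℝ := B * Real.sqrt d with hRdef
  have hR0 : 0 ≤ R := by positivity
  set L : ℝ := R + (R ^ 2 + 1) * ((R + 1) * R) with hLdef
  have hL0 : 0 ≤ L := by positivity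
  refine ⟨π * (Real.sqrt L + 1), by positivity, ?_⟩
  intro x' z z' hx' hz hz' ε₀ hε₀ hclose
  have hπ : 0 < π := Real.pi_pos
  -- norm bounds
  have hzR : ‖z‖ ≤ R := norm_le_of_coords hB.le z hz
  have hz'R : ‖z'‖ ≤ R := norm_le_of_coords hB.le z' hz'
  have hx'R : ‖x'‖ ≤ R := norm_le_of_coords hB.le x' hx'
  set N₁ : ℝ := ⟪z, z'⟫ + 1 with hN₁
  set N₂ : ℝ := ⟪z, x'⟫ + 1 with hN₂
  set D₁ : ℝ := Real.sqrt ((‖z‖ ^ 2 + 1) * (‖z'‖ ^ 2 + 1)) with hD₁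
  set D₂ : ℝ := Real.sqrt ((‖z‖ ^ 2 + 1) * (‖x'‖ ^ 2 + 1)) with hD₂
  have hD₁1 : 1 ≤ D₁ := one_le_D z z'
  have hD₂1 : 1 ≤ D₂ := one_le_D z x'
  -- difference of numerators
  have hN : |N₁ - N₂| ≤ R * ε₀ := by
    have h1 : N₁ - N₂ = ⟪z, z' - x'⟫ := by
      rw [hN₁, hN₂, inner_sub_right]; ring
    rw [h1]
    calc |⟪z, z' - x'⟫| ≤ ‖z‖ * ‖z' - x'‖ := abs_real_inner_le_norm z (z' - x')
      _ ≤ R * ε₀ := by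
          have : ‖z' - x'‖ ≤ ε₀ := by rwa [norm_sub_rev]
          exact mul_le_mul hzR this (norm_nonneg _) hR0
  -- difference of denominators
  have hD : |D₁ - D₂| ≤ (R ^ 2 + 1) * 0 + (R + 1) * (R * ε₀) := by
    set A : ℝ := Real.sqrt (‖z‖ ^ 2 + 1) with hA
    set B₁ : ℝ := Real.sqrt (‖z'‖ ^ 2 + 1) with hB₁
    set B₂ : ℝ := Real.sqrt (‖x'‖ ^ 2 + 1) with hB₂
    have hA1 : 1 ≤ A := by rw [hA, Real.one_le_sqrt]; nlinarith [sq_nonneg ‖z‖]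
    have hB₁1 : 1 ≤ B₁ := by rw [hB₁, Real.one_le_sqrt]; nlinarith [sq_nonneg ‖z'‖]
    have hB₂1 : 1 ≤ B₂ := by rw [hB₂, Real.one_le_sqrt]; nlinarith [sq_nonneg ‖x'‖]
    have hsplit₁ : D₁ = A * B₁ := by
      rw [hD₁, hA, hB₁, Real.sqrt_mul (by positivity)]
    have hsplit₂ : D₂ = A * B₂ := by
      rw [hD₂, hA, hB₂, Real.sqrt_mul (by positivity)]
    have hAle : A ≤ R + 1 := by
      rw [hA]
      have : Real.sqrt (‖z‖ ^ 2 + 1) ≤ Real.sqrt ((R + 1) ^ 2) :=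
        Real.sqrt_le_sqrt (by nlinarith [norm_nonneg z])
      rwa [Real.sqrt_sq (by positivity)] at this
    -- |B₁ - B₂| ≤ R * ε₀
    have hBdiff : |B₁ - B₂| ≤ R * ε₀ := by
      have hsq₁ : B₁ ^ 2 = ‖z'‖ ^ 2 + 1 := Real.sq_sqrt (by positivity)
      have hsq₂ : B₂ ^ 2 = ‖x'‖ ^ 2 + 1 := Real.sq_sqrt (by positivity)
      have hnormdiff : |‖z'‖ - ‖x'‖| ≤ ε₀ := by
        calc |‖z'‖ - ‖x'‖| ≤ ‖z' - x'‖ := abs_norm_sub_norm_le z' x'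
          _ = ‖x' - z'‖ := (norm_sub_rev _ _)
          _ ≤ ε₀ := hclose
      have hmul : |B₁ - B₂| * (B₁ + B₂) = |‖z'‖ ^ 2 - ‖x'‖ ^ 2| := by
        rw [← abs_of_nonneg (by linarith : (0:ℝ) ≤ B₁ + B₂), ← abs_mul]
        congr 1
        linear_combination hsq₁ - hsq₂
      have hsqdiff : |‖z'‖ ^ 2 - ‖x'‖ ^ 2| ≤ ε₀ * (2 * R) := by
        have : |‖z'‖ ^ 2 - ‖x'‖ ^ 2| = |‖z'‖ - ‖x'‖| * (‖z'‖ + ‖x'‖) := by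
          rw [← abs_of_nonneg (by positivity : (0:ℝ) ≤ ‖z'‖ + ‖x'‖), ← abs_mul]
          congr 1; ring
        rw [this]
        exact mul_le_mul hnormdiff (by linarith) (by positivity) hε₀.le
      have h2 : |B₁ - B₂| * 2 ≤ |B₁ - B₂| * (B₁ + B₂) :=
        mul_le_mul_of_nonneg_left (by linarith) (abs_nonneg _)
      nlinarith [abs_nonneg (B₁ - B₂)]
    calc |D₁ - D₂| = A * |B₁ - B₂| := by
          rw [hsplit₁, hsplit₂, ← mul_sub, abs_mul, abs_of_nonneg (by linarith : (0:ℝ) ≤ A)]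
      _ ≤ (R + 1) * (R * ε₀) :=
          mul_le_mul hAle hBdiff (abs_nonneg _) (by linarith)
      _ = (R ^ 2 + 1) * 0 + (R + 1) * (R * ε₀) := by ring
  have hD' : |D₁ - D₂| ≤ (R + 1) * (R * ε₀) := by linarith [hD]
  -- bound on N₂
  have hN₂le : |N₂| ≤ R ^ 2 + 1 := by
    have h1 := abs_real_inner_le_norm z x'
    have h2 : ‖z‖ * ‖x'‖ ≤ R * R :=
      mul_le_mul hzR hx'R (norm_nonneg _) hR0
    calc |N₂| ≤ |(⟪z, x'⟫ : ℝ)| + 1 := by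
          rw [hN₂]; exact (abs_add_le _ _).trans (by simp)
      _ ≤ R ^ 2 + 1 := by nlinarith
  -- difference of ratios
  have hf : |N₁ / D₁ - N₂ / D₂| ≤ L * ε₀ := by
    have hD₁0 : (0:ℝ) < D₁ := by linarith
    have hD₂0 : (0:ℝ) < D₂ := by linarith
    have hdecomp : N₁ / D₁ - N₂ / D₂ = (N₁ - N₂) / D₁ + N₂ * (D₂ - D₁) / (D₁ * D₂) := by
      field_simp
      ring
    rw [hdecomp]
    have ht1 : |(N₁ - N₂) / D₁| ≤ R * ε₀ := by
      rw [abs_div, abs_of_pos hD₁0]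
      calc |N₁ - N₂| / D₁ ≤ |N₁ - N₂| / 1 :=
            div_le_div_of_nonneg_left (abs_nonneg _) one_pos hD₁1
        _ = |N₁ - N₂| := div_one _
        _ ≤ R * ε₀ := hN
    have ht2 : |N₂ * (D₂ - D₁) / (D₁ * D₂)| ≤ (R ^ 2 + 1) * ((R + 1) * (R * ε₀)) := by
      rw [abs_div, abs_mul, abs_of_pos (by positivity : (0:ℝ) < D₁ * D₂)]
      have h1 : |N₂| * |D₂ - D₁| / (D₁ * D₂) ≤ |N₂| * |D₂ - D₁| / 1 :=
        div_le_div_of_nonneg_left (by positivity) one_pos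
          (by nlinarith)
      rw [div_one] at h1
      refine h1.trans ?_
      rw [abs_sub_comm] at hD'
      exact mul_le_mul hN₂le hD' (abs_nonneg _) (by positivity)
    calc |(N₁ - N₂) / D₁ + N₂ * (D₂ - D₁) / (D₁ * D₂)|
        ≤ |(N₁ - N₂) / D₁| + |N₂ * (D₂ - D₁) / (D₁ * D₂)| := abs_add_le _ _
      _ ≤ R * ε₀ + (R ^ 2 + 1) * ((R + 1) * (R * ε₀)) := add_le_add ht1 ht2
      _ = L * ε₀ := by rw [hLdef]; ring
  -- apply the arccos Hölder bound
  have hmem₁ := ratio_mem z z'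
  have hmem₂ := ratio_mem z x'
  have hψ : |ntkPsi d z z' - ntkPsi d z x'| ≤ π * Real.sqrt (L * ε₀) := by
    have h1 := arccos_hoelder hmem₁ hmem₂
    refine h1.trans ?_
    exact mul_le_mul_of_nonneg_left (Real.sqrt_le_sqrt hf) hπ.le
  refine hψ.trans ?_
  have hsqrt : Real.sqrt (L * ε₀) = Real.sqrt L * Real.sqrt ε₀ := Real.sqrt_mul hL0 _
  have hfinal : π * Real.sqrt (L * ε₀) ≤ π * (Real.sqrt L + 1) * Real.sqrt ε₀ := by
    rw [hsqrt]
    nlinarith [Real.sqrt_nonneg L, Real.sqrt_nonneg ε₀]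
  refine hfinal.trans ?_
  exact mul_le_mul_of_nonneg_left (le_max_left _ _) (by positivity)
end

section
/- Fix d ≥ 1 and B > 0. There exists a constant C₅ > 0 depending only on d and B such that for all x', z, z' ∈ [−B,B]^d and all ε₀ > 0 with ‖x' − z'‖₂ ≤ ε₀, one has |K_d(z,z') − K_d(z,x')| ≤ C₅ · max{ε₀, ε₀^{1/4}}. -/
open Real
open scoped RealInnerProductSpace

lemma sqrt_add_le (a b : ℝ) (ha : 0 ≤ a) (hb : 0 ≤ b) :
    Real.sqrt (a + b) ≤ Real.sqrt a + Real.sqrt b := by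
  rw [show a + b = (Real.sqrt a)^2 + (Real.sqrt b)^2 by
    rw [Real.sq_sqrt ha, Real.sq_sqrt hb]]
  have h : (Real.sqrt a)^2 + (Real.sqrt b)^2 ≤ (Real.sqrt a + Real.sqrt b)^2 := by
    have := Real.sqrt_nonneg a; have := Real.sqrt_nonneg b; nlinarith
  calc Real.sqrt _ ≤ Real.sqrt ((Real.sqrt a + Real.sqrt b)^2) := Real.sqrt_le_sqrt h
    _ = _ := Real.sqrt_sq (by positivity)

lemma abs_sqrt_sub_sqrt (a b : ℝ) : |Real.sqrt a - Real.sqrt b| ≤ Real.sqrt |a - b| := by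
  wlog hab : b ≤ a generalizing a b
  · rw [abs_sub_comm, abs_sub_comm a b]; exact this b a (le_of_not_ge hab)
  rcases le_or_gt b 0 with hb | hb
  · rw [Real.sqrt_eq_zero_of_nonpos hb, sub_zero, abs_of_nonneg (Real.sqrt_nonneg _),
      abs_of_nonneg (by linarith)]
    exact Real.sqrt_le_sqrt (by linarith)
  · rw [abs_of_nonneg (sub_nonneg.2 (Real.sqrt_le_sqrt hab)), abs_of_nonneg (by linarith)]
    have : Real.sqrt a ≤ Real.sqrt b + Real.sqrt (a - b) := by
      calc Real.sqrt a = Real.sqrt (b + (a - b)) := by ring_nf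
        _ ≤ _ := sqrt_add_le _ _ hb.le (by linarith)
    linarith


lemma div_sub_div_bound (N₁ N₂ D₁ D₂ : ℝ) (h1 : 1 ≤ D₁) (h2 : 1 ≤ D₂) (hN : |N₂| ≤ D₂) :
    |N₁/D₁ - N₂/D₂| ≤ |N₁ - N₂| + |D₁ - D₂| := by
  have hD1 : (0:ℝ) < D₁ := by linarith
  have hD2 : (0:ℝ) < D₂ := by linarith
  have key : N₁/D₁ - N₂/D₂ = (N₁ - N₂)/D₁ + (N₂/D₂) * ((D₂ - D₁)/D₁) := by
    field_simp; ring
  rw [key]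
  have e1 : |(N₁ - N₂)/D₁| ≤ |N₁ - N₂| := by
    rw [abs_div, abs_of_pos hD1]
    exact div_le_self (abs_nonneg _) h1
  have e2 : |N₂/D₂| ≤ 1 := by
    rw [abs_div, abs_of_pos hD2, div_le_one hD2]; exact hN
  have e3 : |(D₂ - D₁)/D₁| ≤ |D₂ - D₁| := by
    rw [abs_div, abs_of_pos hD1]
    exact div_le_self (abs_nonneg _) h1
  calc |(N₁ - N₂)/D₁ + (N₂/D₂) * ((D₂ - D₁)/D₁)|
      ≤ |(N₁ - N₂)/D₁| + |N₂/D₂| * |(D₂ - D₁)/D₁| := by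
        rw [← abs_mul]; exact abs_add_le _ _
    _ ≤ |N₁ - N₂| + 1 * |D₂ - D₁| :=
        add_le_add e1 (mul_le_mul e2 e3 (abs_nonneg _) zero_le_one)
    _ = |N₁ - N₂| + |D₁ - D₂| := by rw [one_mul, abs_sub_comm D₂ D₁]

lemma sqrt_sub_le_half (a b : ℝ) (ha : 1 ≤ a) (hb : 1 ≤ b) :
    |Real.sqrt a - Real.sqrt b| ≤ |a - b| / 2 := by
  have ha0 : (0:ℝ) ≤ a := by linarith
  have hb0 : (0:ℝ) ≤ b := by linarith
  have hsa : 1 ≤ Real.sqrt a := by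
    rw [show (1:ℝ) = Real.sqrt 1 by simp]; exact Real.sqrt_le_sqrt ha
  have hsb : 1 ≤ Real.sqrt b := by
    rw [show (1:ℝ) = Real.sqrt 1 by simp]; exact Real.sqrt_le_sqrt hb
  have key : |Real.sqrt a - Real.sqrt b| * (Real.sqrt a + Real.sqrt b) = |a - b| := by
    rw [← abs_of_pos (show (0:ℝ) < Real.sqrt a + Real.sqrt b by linarith), ← abs_mul]
    congr 1
    have := Real.sq_sqrt ha0
    have := Real.sq_sqrt hb0
    nlinarith
  have h2 : (2:ℝ) ≤ Real.sqrt a + Real.sqrt b := by linarith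
  nlinarith [abs_nonneg (Real.sqrt a - Real.sqrt b)]

lemma inner_add_one_le (d : ℕ) (x y : EuclideanSpace ℝ (Fin d)) :
    |⟪x, y⟫ + 1| ≤ Real.sqrt ((‖x‖ ^ 2 + 1) * (‖y‖ ^ 2 + 1)) := by
  have hcs : |⟪x, y⟫| ≤ ‖x‖ * ‖y‖ := abs_real_inner_le_norm x y
  have hsq : (⟪x, y⟫ + 1)^2 ≤ (‖x‖ ^ 2 + 1) * (‖y‖ ^ 2 + 1) := by
    have h2 : 2 * (‖x‖ * ‖y‖) ≤ ‖x‖^2 + ‖y‖^2 := by nlinarith [sq_nonneg (‖x‖ - ‖y‖)]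
    have := abs_le.1 hcs
    nlinarith
  calc |⟪x, y⟫ + 1| = Real.sqrt ((⟪x, y⟫ + 1)^2) := (Real.sqrt_sq_eq_abs _).symm
    _ ≤ _ := Real.sqrt_le_sqrt hsq

lemma norm_le_cube {d : ℕ} {B : ℝ} (hB : 0 ≤ B) (x : EuclideanSpace ℝ (Fin d))
    (hx : ∀ i, x i ∈ Set.Icc (-B) B) : ‖x‖ ≤ B * Real.sqrt d := by
  rw [EuclideanSpace.norm_eq]
  have h1 : ∑ i, ‖x i‖ ^ 2 ≤ ∑ _i : Fin d, B ^ 2 := by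
    apply Finset.sum_le_sum
    intro i _
    have h := hx i
    rw [Real.norm_eq_abs, sq_abs]
    nlinarith [h.1, h.2]
  have h2 : ∑ _i : Fin d, B ^ 2 = (d : ℝ) * B ^ 2 := by simp [Finset.sum_const]
  calc Real.sqrt (∑ i, ‖x i‖ ^ 2) ≤ Real.sqrt ((d:ℝ) * B^2) := Real.sqrt_le_sqrt (by rw [← h2]; exact h1)
    _ = B * Real.sqrt d := by
        rw [mul_comm, Real.sqrt_mul (sq_nonneg B), Real.sqrt_sq hB]



set_option maxHeartbeats 1000000 in
/-- **Hölder-type continuity of the NTK.**  For fixed `d ≥ 1` and `B > 0`, there is a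
constant `C₅ > 0` depending only on `d` and `B` such that for all `x', z, z' ∈ [−B,B]^d`
and `ε₀ > 0` with `‖x' − z'‖₂ ≤ ε₀`, one has
`|K_d(z,z') − K_d(z,x')| ≤ C₅ · max{ε₀, ε₀^{1/4}}`. -/
theorem ntkK_continuity (d : ℕ) (hd : 1 ≤ d) (B : ℝ) (hB : 0 < B) :
    ∃ C₅ : ℝ, 0 < C₅ ∧
      ∀ (x' z z' : EuclideanSpace ℝ (Fin d)),
        (∀ i, x' i ∈ Set.Icc (-B) B) →
        (∀ i, z i ∈ Set.Icc (-B) B) →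
        (∀ i, z' i ∈ Set.Icc (-B) B) →
        ∀ ε₀ : ℝ, 0 < ε₀ → ‖x' - z'‖ ≤ ε₀ →
          |ntkK d z z' - ntkK d z x'| ≤ C₅ * max ε₀ (ε₀ ^ ((1 : ℝ) / 4)) := by
  have hpi := Real.pi_pos
  have hpi3 := Real.pi_gt_three
  obtain ⟨R, hRdef⟩ : ∃ R : ℝ, R = B * Real.sqrt d := ⟨_, rfl⟩
  have hR0 : 0 < R := by
    rw [hRdef]
    apply mul_pos hB
    apply Real.sqrt_pos.2
    exact_mod_cast Nat.lt_of_lt_of_le Nat.zero_lt_one hd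
  obtain ⟨L, hLdef⟩ : ∃ L : ℝ, L = R + (R^2+1)*R := ⟨_, rfl⟩
  obtain ⟨L', hL'def⟩ : ∃ L' : ℝ, L' = 4*R + 4*R^3 := ⟨_, rfl⟩
  have hL0 : 0 < L := by rw [hLdef]; nlinarith [sq_nonneg R]
  have hL'0 : 0 < L' := by rw [hL'def]; nlinarith [pow_pos hR0 3]
  obtain ⟨C, hCdef⟩ : ∃ C : ℝ, C = 2*R + 2*(R^2+1)*Real.sqrt L + Real.sqrt L' := ⟨_, rfl⟩
  have hC0 : 0 < C := by
    rw [hCdef]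
    have t1 : (0:ℝ) ≤ 2*(R^2+1)*Real.sqrt L := by positivity
    have t2 : (0:ℝ) ≤ Real.sqrt L' := Real.sqrt_nonneg _
    linarith
  refine ⟨2*C, by linarith, ?_⟩
  intro x' z z' hx' hz hz' ε₀ hε₀ hdist
  -- norm bounds
  have hzR : ‖z‖ ≤ R := by rw [hRdef]; exact norm_le_cube hB.le z hz
  have hz'R : ‖z'‖ ≤ R := by rw [hRdef]; exact norm_le_cube hB.le z' hz'
  have hx'R : ‖x'‖ ≤ R := by rw [hRdef]; exact norm_le_cube hB.le x' hx'
  have hz0 : (0:ℝ) ≤ ‖z‖ := norm_nonneg _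
  have hz'0 : (0:ℝ) ≤ ‖z'‖ := norm_nonneg _
  have hx'0 : (0:ℝ) ≤ ‖x'‖ := norm_nonneg _
  have hdist' : ‖z' - x'‖ ≤ ε₀ := by rwa [norm_sub_rev]
  -- key quantities
  obtain ⟨N₁, hN₁⟩ : ∃ N : ℝ, N = ⟪z, z'⟫ + 1 := ⟨_, rfl⟩
  obtain ⟨N₂, hN₂⟩ : ∃ N : ℝ, N = ⟪z, x'⟫ + 1 := ⟨_, rfl⟩
  obtain ⟨A₁, hA₁⟩ : ∃ A : ℝ, A = (‖z‖^2+1)*(‖z'‖^2+1) := ⟨_, rfl⟩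
  obtain ⟨A₂, hA₂⟩ : ∃ A : ℝ, A = (‖z‖^2+1)*(‖x'‖^2+1) := ⟨_, rfl⟩
  have hone : ∀ t : ℝ, (1:ℝ) ≤ t^2 + 1 := fun t => by nlinarith [sq_nonneg t]
  have honemul : ∀ s t : ℝ, (1:ℝ) ≤ (s^2+1)*(t^2+1) := by
    intro s t
    calc (1:ℝ) = 1*1 := by norm_num
      _ ≤ (s^2+1)*(t^2+1) :=
        mul_le_mul (hone s) (hone t) (by norm_num) (by nlinarith [sq_nonneg s])
  have hA₁1 : 1 ≤ A₁ := by rw [hA₁]; exact honemul _ _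
  have hA₂1 : 1 ≤ A₂ := by rw [hA₂]; exact honemul _ _
  obtain ⟨D₁, hD₁⟩ : ∃ D : ℝ, D = Real.sqrt A₁ := ⟨_, rfl⟩
  obtain ⟨D₂, hD₂⟩ : ∃ D : ℝ, D = Real.sqrt A₂ := ⟨_, rfl⟩
  have hD₁1 : 1 ≤ D₁ := by
    rw [hD₁, show (1:ℝ) = Real.sqrt 1 by simp]; exact Real.sqrt_le_sqrt hA₁1
  have hD₂1 : 1 ≤ D₂ := by
    rw [hD₂, show (1:ℝ) = Real.sqrt 1 by simp]; exact Real.sqrt_le_sqrt hA₂1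
  have hND₁ : |N₁| ≤ D₁ := by
    rw [hN₁, hD₁, hA₁]; exact inner_add_one_le d z z'
  have hND₂ : |N₂| ≤ D₂ := by
    rw [hN₂, hD₂, hA₂]; exact inner_add_one_le d z x'
  -- inner product difference
  have hinner : |⟪z, z'⟫ - ⟪z, x'⟫| ≤ R * ε₀ := by
    rw [← inner_sub_right]
    calc |⟪z, z' - x'⟫| ≤ ‖z‖ * ‖z' - x'‖ := abs_real_inner_le_norm z (z' - x')
      _ ≤ R * ε₀ := mul_le_mul hzR hdist' (norm_nonneg _) hR0.le
  have hN_diff : |N₁ - N₂| ≤ R * ε₀ := by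
    rw [hN₁, hN₂, show ⟪z, z'⟫ + 1 - (⟪z, x'⟫ + 1) = ⟪z, z'⟫ - ⟪z, x'⟫ by ring]
    exact hinner
  -- norm-square difference
  have hnormsq : |‖z'‖^2 - ‖x'‖^2| ≤ 2*R*ε₀ := by
    have h1 : |‖z'‖ - ‖x'‖| ≤ ε₀ := (abs_norm_sub_norm_le z' x').trans hdist'
    have h2 : ‖z'‖^2 - ‖x'‖^2 = (‖z'‖ - ‖x'‖) * (‖z'‖ + ‖x'‖) := by ring
    rw [h2, abs_mul, abs_of_nonneg (by linarith : (0:ℝ) ≤ ‖z'‖ + ‖x'‖)]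
    calc |‖z'‖ - ‖x'‖| * (‖z'‖ + ‖x'‖) ≤ ε₀ * (2*R) :=
        mul_le_mul h1 (by linarith) (by linarith) hε₀.le
      _ = 2*R*ε₀ := by ring
  -- D difference
  have hD_diff : |D₁ - D₂| ≤ (R^2+1)*R*ε₀ := by
    have h1 : |D₁ - D₂| ≤ |A₁ - A₂| / 2 := by
      rw [hD₁, hD₂]; exact sqrt_sub_le_half A₁ A₂ hA₁1 hA₂1
    have h2 : A₁ - A₂ = (‖z‖^2+1) * (‖z'‖^2 - ‖x'‖^2) := by rw [hA₁, hA₂]; ring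
    have h3 : |A₁ - A₂| ≤ (R^2+1) * (2*R*ε₀) := by
      rw [h2, abs_mul, abs_of_nonneg (by positivity : (0:ℝ) ≤ ‖z‖^2+1)]
      have h4 : ‖z‖^2 + 1 ≤ R^2 + 1 := by
        have := pow_le_pow_left₀ hz0 hzR 2; linarith
      exact mul_le_mul h4 hnormsq (abs_nonneg _) (by positivity)
    calc |D₁ - D₂| ≤ |A₁ - A₂| / 2 := h1
      _ ≤ (R^2+1) * (2*R*ε₀) / 2 := by linarith
      _ = (R^2+1)*R*ε₀ := by ring
  -- u difference
  have hu_diff : |N₁/D₁ - N₂/D₂| ≤ L * ε₀ := by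
    calc |N₁/D₁ - N₂/D₂| ≤ |N₁ - N₂| + |D₁ - D₂| :=
        div_sub_div_bound N₁ N₂ D₁ D₂ hD₁1 hD₂1 hND₂
      _ ≤ R * ε₀ + (R^2+1)*R*ε₀ := add_le_add hN_diff hD_diff
      _ = L * ε₀ := by rw [hLdef]; ring
  -- u in [-1,1]
  have hu₁ : N₁/D₁ ∈ Set.Icc (-1:ℝ) 1 := by
    have h : |N₁/D₁| ≤ 1 := by
      rw [abs_div, abs_of_pos (by linarith : (0:ℝ) < D₁), div_le_one (by linarith)]
      exact hND₁
    exact abs_le.1 h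
  have hu₂ : N₂/D₂ ∈ Set.Icc (-1:ℝ) 1 := by
    have h : |N₂/D₂| ≤ 1 := by
      rw [abs_div, abs_of_pos (by linarith : (0:ℝ) < D₂), div_le_one (by linarith)]
      exact hND₂
    exact abs_le.1 h
  -- psi difference
  obtain ⟨ψ₁, hψ₁⟩ : ∃ p : ℝ, p = Real.arccos (N₁/D₁) := ⟨_, rfl⟩
  obtain ⟨ψ₂, hψ₂⟩ : ∃ p : ℝ, p = Real.arccos (N₂/D₂) := ⟨_, rfl⟩
  have hε₀sqrt : (0:ℝ) ≤ Real.sqrt ε₀ := Real.sqrt_nonneg _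
  have hψ_diff : |ψ₁ - ψ₂| ≤ π * Real.sqrt L * Real.sqrt ε₀ := by
    rw [hψ₁, hψ₂]
    calc |Real.arccos (N₁/D₁) - Real.arccos (N₂/D₂)|
        ≤ π * Real.sqrt |N₁/D₁ - N₂/D₂| := arccos_hoelder hu₁ hu₂
      _ ≤ π * Real.sqrt (L * ε₀) := by
          apply mul_le_mul_of_nonneg_left _ hpi.le
          exact Real.sqrt_le_sqrt hu_diff
      _ = π * Real.sqrt L * Real.sqrt ε₀ := by
          rw [Real.sqrt_mul hL0.le, mul_assoc]
  have hψ₁mem : ψ₁ ∈ Set.Icc 0 π := by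
    rw [hψ₁]; exact ⟨Real.arccos_nonneg _, Real.arccos_le_pi _⟩
  have hψ₂mem : ψ₂ ∈ Set.Icc 0 π := by
    rw [hψ₂]; exact ⟨Real.arccos_nonneg _, Real.arccos_le_pi _⟩
  have hN₂bound : |N₂| ≤ R^2 + 1 := by
    rw [hN₂]
    have h1 : |⟪z, x'⟫| ≤ R^2 := by
      calc |⟪z, x'⟫| ≤ ‖z‖ * ‖x'‖ := abs_real_inner_le_norm z x'
        _ ≤ R * R := mul_le_mul hzR hx'R hx'0 hR0.le
        _ = R^2 := by ring
    have h2 := abs_le.1 h1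
    rw [abs_le]
    constructor <;> linarith [h2.1, h2.2]
  -- g difference
  obtain ⟨g₁, hg₁⟩ : ∃ g : ℝ, g = ‖z - z'‖^2 + ‖z‖^2*‖z'‖^2 - ⟪z, z'⟫^2 := ⟨_, rfl⟩
  obtain ⟨g₂, hg₂⟩ : ∃ g : ℝ, g = ‖z - x'‖^2 + ‖z‖^2*‖x'‖^2 - ⟪z, x'⟫^2 := ⟨_, rfl⟩
  have hg_diff : |g₁ - g₂| ≤ L' * ε₀ := by
    have c1 : |‖z - z'‖^2 - ‖z - x'‖^2| ≤ 4*R*ε₀ := by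
      have h1 : |‖z - z'‖ - ‖z - x'‖| ≤ ε₀ := by
        calc |‖z - z'‖ - ‖z - x'‖| ≤ ‖(z - z') - (z - x')‖ := abs_norm_sub_norm_le _ _
          _ = ‖x' - z'‖ := by rw [show (z - z') - (z - x') = x' - z' by abel]
          _ ≤ ε₀ := hdist
      have h2 : ‖z - z'‖ ≤ 2*R := by
        calc ‖z - z'‖ ≤ ‖z‖ + ‖z'‖ := norm_sub_le _ _
          _ ≤ 2*R := by linarith
      have h3 : ‖z - x'‖ ≤ 2*R := by
        calc ‖z - x'‖ ≤ ‖z‖ + ‖x'‖ := norm_sub_le _ _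
          _ ≤ 2*R := by linarith
      have h4 : ‖z - z'‖^2 - ‖z - x'‖^2 = (‖z - z'‖ - ‖z - x'‖)*(‖z - z'‖ + ‖z - x'‖) := by
        ring
      rw [h4, abs_mul, abs_of_nonneg (by positivity : (0:ℝ) ≤ ‖z - z'‖ + ‖z - x'‖)]
      calc |‖z - z'‖ - ‖z - x'‖| * (‖z - z'‖ + ‖z - x'‖) ≤ ε₀ * (4*R) :=
          mul_le_mul h1 (by linarith) (by positivity) hε₀.le
        _ = 4*R*ε₀ := by ring
    have c2 : |‖z‖^2*‖z'‖^2 - ‖z‖^2*‖x'‖^2| ≤ 2*R^3*ε₀ := by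
      have h1 : ‖z‖^2*‖z'‖^2 - ‖z‖^2*‖x'‖^2 = ‖z‖^2 * (‖z'‖^2 - ‖x'‖^2) := by ring
      rw [h1, abs_mul, abs_of_nonneg (sq_nonneg _)]
      calc ‖z‖^2 * |‖z'‖^2 - ‖x'‖^2| ≤ R^2 * (2*R*ε₀) :=
          mul_le_mul (pow_le_pow_left₀ hz0 hzR 2) hnormsq (abs_nonneg _) (by positivity)
        _ = 2*R^3*ε₀ := by ring
    have c3 : |⟪z, z'⟫^2 - ⟪z, x'⟫^2| ≤ 2*R^3*ε₀ := by
      have hi1 : |⟪z, z'⟫| ≤ R^2 := by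
        calc |⟪z, z'⟫| ≤ ‖z‖ * ‖z'‖ := abs_real_inner_le_norm z z'
          _ ≤ R * R := mul_le_mul hzR hz'R hz'0 hR0.le
          _ = R^2 := by ring
      have hi2 : |⟪z, x'⟫| ≤ R^2 := by
        calc |⟪z, x'⟫| ≤ ‖z‖ * ‖x'‖ := abs_real_inner_le_norm z x'
          _ ≤ R * R := mul_le_mul hzR hx'R hx'0 hR0.le
          _ = R^2 := by ring
      have h4 : ⟪z, z'⟫^2 - ⟪z, x'⟫^2 = (⟪z, z'⟫ + ⟪z, x'⟫)*(⟪z, z'⟫ - ⟪z, x'⟫) := by ring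
      rw [h4, abs_mul]
      have h5 : |⟪z, z'⟫ + ⟪z, x'⟫| ≤ 2*R^2 := by
        calc |⟪z, z'⟫ + ⟪z, x'⟫| ≤ |⟪z, z'⟫| + |⟪z, x'⟫| := abs_add_le _ _
          _ ≤ 2*R^2 := by linarith
      calc |⟪z, z'⟫ + ⟪z, x'⟫| * |⟪z, z'⟫ - ⟪z, x'⟫| ≤ (2*R^2) * (R*ε₀) :=
          mul_le_mul h5 hinner (abs_nonneg _) (by positivity)
        _ = 2*R^3*ε₀ := by ring
    have c1' := abs_le.1 c1
    have c2' := abs_le.1 c2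
    have c3' := abs_le.1 c3
    have hsplit : g₁ - g₂ = (‖z - z'‖^2 - ‖z - x'‖^2) + (‖z‖^2*‖z'‖^2 - ‖z‖^2*‖x'‖^2)
        - (⟪z, z'⟫^2 - ⟪z, x'⟫^2) := by rw [hg₁, hg₂]; ring
    rw [abs_le]
    constructor <;> rw [hL'def] <;>
      linarith [hsplit, c1'.1, c1'.2, c2'.1, c2'.2, c3'.1, c3'.2]
  have hsqrtg : |Real.sqrt g₁ - Real.sqrt g₂| ≤ Real.sqrt L' * Real.sqrt ε₀ := by
    calc |Real.sqrt g₁ - Real.sqrt g₂| ≤ Real.sqrt |g₁ - g₂| := abs_sqrt_sub_sqrt g₁ g₂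
      _ ≤ Real.sqrt (L' * ε₀) := Real.sqrt_le_sqrt hg_diff
      _ = Real.sqrt L' * Real.sqrt ε₀ := Real.sqrt_mul hL'0.le _
  -- expand the kernel difference
  have hexpand : ntkK d z z' - ntkK d z x'
      = (2/π) * ((π - ψ₁) * (N₁ - N₂) + (ψ₂ - ψ₁) * N₂)
        + (1/π) * (Real.sqrt g₁ - Real.sqrt g₂) := by
    rw [hψ₁, hψ₂, hN₁, hN₂, hD₁, hD₂, hA₁, hA₂, hg₁, hg₂]
    simp only [ntkK, ntkPsi]
    ring
  -- bound it
  have hterm1 : |(π - ψ₁) * (N₁ - N₂)| ≤ π * (R * ε₀) := by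
    rw [abs_mul]
    apply mul_le_mul _ hN_diff (abs_nonneg _) hpi.le
    rw [abs_of_nonneg (by linarith [hψ₁mem.2] : (0:ℝ) ≤ π - ψ₁)]
    linarith [hψ₁mem.1]
  have hterm2 : |(ψ₂ - ψ₁) * N₂| ≤ (π * Real.sqrt L * Real.sqrt ε₀) * (R^2 + 1) := by
    rw [abs_mul, abs_sub_comm]
    exact mul_le_mul hψ_diff hN₂bound (abs_nonneg _) (by positivity)
  have hbound : |ntkK d z z' - ntkK d z x'| ≤ C * ε₀ + C * Real.sqrt ε₀ := by
    rw [hexpand]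
    have h1 : |(2/π) * ((π - ψ₁) * (N₁ - N₂) + (ψ₂ - ψ₁) * N₂)|
        ≤ (2/π) * (π * (R * ε₀) + (π * Real.sqrt L * Real.sqrt ε₀) * (R^2 + 1)) := by
      rw [abs_mul, abs_of_pos (by positivity : (0:ℝ) < 2/π)]
      apply mul_le_mul_of_nonneg_left _ (by positivity)
      calc |(π - ψ₁) * (N₁ - N₂) + (ψ₂ - ψ₁) * N₂|
          ≤ |(π - ψ₁) * (N₁ - N₂)| + |(ψ₂ - ψ₁) * N₂| := abs_add_le _ _
        _ ≤ _ := add_le_add hterm1 hterm2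
    have h2 : |(1/π) * (Real.sqrt g₁ - Real.sqrt g₂)| ≤ Real.sqrt L' * Real.sqrt ε₀ := by
      rw [abs_mul, abs_of_pos (by positivity : (0:ℝ) < 1/π)]
      have h2b : (1:ℝ)/π ≤ 1 := by rw [div_le_one hpi]; linarith
      have h2c := mul_le_of_le_one_left (abs_nonneg (Real.sqrt g₁ - Real.sqrt g₂)) h2b
      linarith
    have h3 : (2/π) * (π * (R * ε₀) + (π * Real.sqrt L * Real.sqrt ε₀) * (R^2 + 1))
        = 2*R*ε₀ + 2*(R^2+1)*Real.sqrt L * Real.sqrt ε₀ := by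
      field_simp
    calc |(2/π) * ((π - ψ₁) * (N₁ - N₂) + (ψ₂ - ψ₁) * N₂)
          + (1/π) * (Real.sqrt g₁ - Real.sqrt g₂)|
        ≤ |(2/π) * ((π - ψ₁) * (N₁ - N₂) + (ψ₂ - ψ₁) * N₂)|
          + |(1/π) * (Real.sqrt g₁ - Real.sqrt g₂)| := abs_add_le _ _
      _ ≤ (2/π) * (π * (R * ε₀) + (π * Real.sqrt L * Real.sqrt ε₀) * (R^2 + 1))
          + Real.sqrt L' * Real.sqrt ε₀ := add_le_add h1 h2
      _ = 2*R*ε₀ + 2*(R^2+1)*Real.sqrt L * Real.sqrt ε₀ + Real.sqrt L' * Real.sqrt ε₀ := by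
          rw [h3]
      _ ≤ C * ε₀ + C * Real.sqrt ε₀ := by
          rw [hCdef]
          have e1 : (0:ℝ) ≤ (2*(R^2+1)*Real.sqrt L + Real.sqrt L') * ε₀ :=
            mul_nonneg (by positivity) hε₀.le
          have e2 : (0:ℝ) ≤ 2*R*Real.sqrt ε₀ :=
            mul_nonneg (by linarith) hε₀sqrt
          linarith [e1, e2]
  -- final: ε₀ and √ε₀ vs max
  have hM1 : ε₀ ≤ max ε₀ (ε₀ ^ ((1:ℝ)/4)) := le_max_left _ _
  have hM2 : Real.sqrt ε₀ ≤ max ε₀ (ε₀ ^ ((1:ℝ)/4)) := by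
    rcases le_or_gt ε₀ 1 with h | h
    · refine le_trans ?_ (le_max_right _ _)
      rw [Real.sqrt_eq_rpow]
      exact Real.rpow_le_rpow_of_exponent_ge hε₀ h (by norm_num)
    · refine le_trans ?_ (le_max_left _ _)
      have hsq : ε₀ ≤ ε₀^2 := by
        calc ε₀ = ε₀*1 := (mul_one _).symm
          _ ≤ ε₀*ε₀ := mul_le_mul_of_nonneg_left h.le hε₀.le
          _ = ε₀^2 := (sq ε₀).symm
      calc Real.sqrt ε₀ ≤ Real.sqrt (ε₀^2) := Real.sqrt_le_sqrt hsq
        _ = ε₀ := Real.sqrt_sq hε₀.le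
  calc |ntkK d z z' - ntkK d z x'| ≤ C * ε₀ + C * Real.sqrt ε₀ := hbound
    _ ≤ C * max ε₀ (ε₀ ^ ((1:ℝ)/4)) + C * max ε₀ (ε₀ ^ ((1:ℝ)/4)) :=
        add_le_add (mul_le_mul_of_nonneg_left hM1 hC0.le)
          (mul_le_mul_of_nonneg_left hM2 hC0.le)
    _ = 2*C * max ε₀ (ε₀ ^ ((1:ℝ)/4)) := by ring
end

section
/- Let n ≥ 1, let B₀ be a real symmetric positive semidefinite n×n matrix with smallest eigenvalue λ₀, let Δ ≥ 0 and y ∈ ℝⁿ. Let A : [0,∞) → (real symmetric n×n matrices) be continuous with ‖A(s) − B₀‖_op ≤ nΔ for all s ≥ 0, and let u, v : [0,∞) → ℝⁿ be differentiable with u'(s) = −(1/n)·A(s)·u(s), v'(s) = −(1/n)·B₀·v(s) for all s ≥ 0, and u(0) = v(0) = −y. Then for all t ≥ 0, ‖u(t) − v(t)‖₂ ≤ ‖y‖₂ · Δ · t · e^{−(λ₀ − nΔ)·t/n}. -/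
/-!
Both residuals satisfy a one-sided Grönwall inequality `⟪w, w'⟫ ≤ K‖w‖² + c e^{Ks} ‖w‖`.
For `z = e^{-Ks} w` this reads `⟪z, z'⟫ ≤ c‖z‖`, so the smoothed norm `√(‖z‖² + ε²)` grows at
rate at most `c`, whence `‖w t‖ ≤ e^{Kt} (‖w 0‖ + c t)`.

For `v` the Rayleigh bound `λ₀‖v‖² ≤ vᵀB₀v` gives `K = -λ₀/n`, `c = 0`. For `w = u - v`, write
`A u - B₀ v = B₀ w + (A - B₀) w + (A - B₀) v`: the perturbation adds `Δ` to the rate and the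
forcing `Δ‖v‖ ≤ Δ‖y‖ e^{-λ₀ s/n}`, while `w 0 = 0`.
-/

open Real Matrix
open WithLp (toLp)
open scoped RealInnerProductSpace

section OneSidedGronwall

variable {E : Type*} [NormedAddCommGroup E] [InnerProductSpace ℝ E]

theorem norm_le_of_inner_deriv_le {z z' : ℝ → E} {h H : ℝ → ℝ}
    (hz : ∀ s, 0 ≤ s → HasDerivAt z (z' s) s) (hH : ∀ s, 0 ≤ s → HasDerivAt H (h s) s)
    (hh : ∀ s, 0 ≤ s → 0 ≤ h s) (hzz' : ∀ s, 0 ≤ s → ⟪z s, z' s⟫ ≤ h s * ‖z s‖)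
    {t : ℝ} (ht : 0 ≤ t) :
    ‖z t‖ ≤ ‖z 0‖ + (H t - H 0) := by
  refine le_of_forall_pos_le_add fun ε hε => ?_
  -- `‖z‖` need not be differentiable where `z` vanishes
  set φ : ℝ → ℝ := fun s => √(‖z s‖ ^ 2 + ε ^ 2)
  have hφ : ∀ s, 0 ≤ s → HasDerivAt φ (2 * ⟪z s, z' s⟫ / (2 * φ s)) s := fun s hs =>
    ((hz s hs).norm_sq.add_const _).sqrt (by positivity)
  have hφ_le : ∀ s, 0 ≤ s → 2 * ⟪z s, z' s⟫ / (2 * φ s) ≤ h s := by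
    intro s hs
    have hzφ : ‖z s‖ ≤ φ s := le_sqrt_of_sq_le (by nlinarith)
    rw [div_le_iff₀ (by positivity)]
    nlinarith [hzz' s hs, hh s hs]
  have hφ_bound : φ t ≤ φ 0 + (H t - H 0) := by
    have hB : ∀ s, 0 ≤ s → HasDerivAt (fun s => φ 0 + (H s - H 0)) (h s) s := fun s hs =>
      ((hH s hs).sub_const _).const_add _
    exact image_le_of_deriv_right_le_deriv_boundary
      (fun s hs => (hφ s hs.1).continuousAt.continuousWithinAt)
      (fun s hs => (hφ s hs.1).hasDerivWithinAt) (by simp)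
      (fun s hs => (hB s hs.1).continuousAt.continuousWithinAt)
      (fun s hs => (hB s hs.1).hasDerivWithinAt) (fun s hs => hφ_le s hs.1) ⟨ht, le_rfl⟩
  have hφ0 : φ 0 ≤ ‖z 0‖ + ε :=
    (sqrt_le_left (by positivity)).2 (by nlinarith [norm_nonneg (z 0)])
  have hzφ : ‖z t‖ ≤ φ t := le_sqrt_of_sq_le (by nlinarith)
  linarith

theorem norm_le_exp_mul_of_inner_deriv_le {w w' : ℝ → E} {K c : ℝ} (hc : 0 ≤ c)
    (hw : ∀ s, 0 ≤ s → HasDerivAt w (w' s) s)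
    (hww' : ∀ s, 0 ≤ s → ⟪w s, w' s⟫ ≤ K * ‖w s‖ ^ 2 + c * exp (K * s) * ‖w s‖)
    {t : ℝ} (ht : 0 ≤ t) :
    ‖w t‖ ≤ exp (K * t) * (‖w 0‖ + c * t) := by
  have hexp : ∀ s, HasDerivAt (fun s => exp (-K * s)) (-K * exp (-K * s)) s := fun s => by
    simpa [mul_comm] using ((hasDerivAt_id s).const_mul (-K)).exp
  have hz : ∀ s, 0 ≤ s → HasDerivAt (fun s => exp (-K * s) • w s)
      (exp (-K * s) • w' s + (-K * exp (-K * s)) • w s) s := fun s hs =>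
    (hexp s).smul (hw s hs)
  have hzz' : ∀ s, 0 ≤ s →
      ⟪exp (-K * s) • w s, exp (-K * s) • w' s + (-K * exp (-K * s)) • w s⟫ ≤
        c * ‖exp (-K * s) • w s‖ := by
    intro s hs
    have hexpK : exp (-K * s) * exp (K * s) = 1 := by rw [← exp_add]; simp
    rw [inner_add_right, real_inner_smul_left, real_inner_smul_left, real_inner_smul_right,
      real_inner_smul_right, real_inner_self_eq_norm_sq, norm_smul, norm_of_nonneg (exp_pos _).le]
    have hscaled := mul_le_mul_of_nonneg_left (hww' s hs) (sq_nonneg (exp (-K * s)))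
    linear_combination hscaled + c * exp (-K * s) * ‖w s‖ * hexpK
  have hzt := norm_le_of_inner_deriv_le hz (fun s _ => hasDerivAt_mul_const c)
    (fun _ _ => hc) hzz' ht
  rw [norm_smul, norm_of_nonneg (exp_pos _).le] at hzt
  simp only [mul_zero, exp_zero, one_smul, zero_mul, sub_zero] at hzt
  calc ‖w t‖ = exp (K * t) * (exp (-K * t) * ‖w t‖) := by
        rw [← mul_assoc, ← exp_add]; simp
    _ ≤ exp (K * t) * (‖w 0‖ + c * t) := by
        rw [mul_comm c t]; gcongr

end OneSidedGronwall

section EuclideanCoordinates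

variable {ι : Type*} [Fintype ι]

def rayleighValues (B : Matrix ι ι ℝ) : Set ℝ :=
  {r | ∃ v : ι → ℝ, ∑ i, v i ^ 2 = 1 ∧ r = v ⬝ᵥ B *ᵥ v}

theorem sqrt_sum_sq_eq_norm_toLp (x : ι → ℝ) : √(∑ i, x i ^ 2) = ‖toLp 2 x‖ := by
  simp [EuclideanSpace.norm_eq, sq_abs]

theorem dotProduct_eq_inner_toLp (x y : ι → ℝ) :
    x ⬝ᵥ y = ⟪toLp 2 x, toLp 2 y⟫ := by
  simp [EuclideanSpace.inner_toLp_toLp, dotProduct_comm]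

theorem HasDerivAt.toLp {f : ℝ → ι → ℝ} {f' : ι → ℝ} {t : ℝ} (hf : HasDerivAt f f' t) :
    HasDerivAt (fun s => toLp 2 (f s)) (toLp 2 f') t :=
  (PiLp.hasFDerivAt_toLp 2 (f t)).comp_hasDerivAt t hf

theorem mul_norm_sq_le_dotProduct_mulVec {B : Matrix ι ι ℝ} {lam : ℝ}
    (hlam : lam ∈ lowerBounds (rayleighValues B))
    (w : ι → ℝ) :
    lam * ‖toLp 2 w‖ ^ 2 ≤ w ⬝ᵥ B *ᵥ w := by
  rcases eq_or_ne w 0 with rfl | hw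
  · simp
  set r := ‖toLp 2 w‖ with hr_def
  have hr : 0 < r := norm_pos_iff.2 (by simpa using hw)
  have hr2 : ∑ i, w i ^ 2 = r ^ 2 := by
    rw [hr_def, ← sqrt_sum_sq_eq_norm_toLp, sq_sqrt (by positivity)]
  have hunit : ∑ i, (r⁻¹ • w) i ^ 2 = 1 := by
    simp [mul_pow, ← Finset.mul_sum, hr2, hr.ne']
  have hle := hlam ⟨r⁻¹ • w, hunit, rfl⟩
  rw [mulVec_smul, smul_dotProduct, dotProduct_smul, smul_eq_mul, smul_eq_mul] at hle
  calc lam * r ^ 2 ≤ r⁻¹ * (r⁻¹ * (w ⬝ᵥ B *ᵥ w)) * r ^ 2 := by gcongr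
    _ = w ⬝ᵥ B *ᵥ w := by field_simp

theorem dotProduct_neg_smul_mulVec_add_le {B : Matrix ι ι ℝ} {lam c : ℝ}
    (hlam : lam ∈ lowerBounds (rayleighValues B))
    (hc : 0 ≤ c) (w x : ι → ℝ) :
    w ⬝ᵥ (-c • (B *ᵥ w + x)) ≤
      -(c * lam) * ‖toLp 2 w‖ ^ 2 + c * ‖toLp 2 w‖ * ‖toLp 2 x‖ := by
  have hBw := mul_norm_sq_le_dotProduct_mulVec hlam w
  have hwx : -(‖toLp 2 w‖ * ‖toLp 2 x‖) ≤ w ⬝ᵥ x := by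
    rw [dotProduct_eq_inner_toLp]
    exact neg_le_of_abs_le (abs_real_inner_le_norm _ _)
  rw [dotProduct_smul, dotProduct_add, smul_eq_mul]
  nlinarith

theorem dotProduct_sub_neg_smul_mulVec_le {A B : Matrix ι ι ℝ} {lam c δ : ℝ}
    (hlam : lam ∈ lowerBounds (rayleighValues B))
    (hc : 0 ≤ c) (hAB : ∀ x, ‖toLp 2 ((A - B) *ᵥ x)‖ ≤ δ * ‖toLp 2 x‖)
    (u v : ι → ℝ) :
    (u - v) ⬝ᵥ (-c • (A *ᵥ u) - -c • (B *ᵥ v)) ≤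
      c * (δ - lam) * ‖toLp 2 (u - v)‖ ^ 2 +
        c * δ * ‖toLp 2 v‖ * ‖toLp 2 (u - v)‖ := by
  have hsplit : -c • (A *ᵥ u) - -c • (B *ᵥ v) =
      -c • (B *ᵥ (u - v) + ((A - B) *ᵥ (u - v) + (A - B) *ᵥ v)) := by
    simp only [sub_mulVec, mulVec_sub, smul_sub, smul_add]
    module
  have hx : ‖toLp 2 ((A - B) *ᵥ (u - v) + (A - B) *ᵥ v)‖ ≤
      δ * ‖toLp 2 (u - v)‖ + δ * ‖toLp 2 v‖ := by
    rw [WithLp.toLp_add]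
    exact (norm_add_le _ _).trans (add_le_add (hAB _) (hAB _))
  rw [hsplit]
  have hdiss := dotProduct_neg_smul_mulVec_add_le hlam hc (u - v)
    ((A - B) *ᵥ (u - v) + (A - B) *ᵥ v)
  nlinarith [hdiss,
    mul_le_mul_of_nonneg_left hx (mul_nonneg hc (norm_nonneg (toLp 2 (u - v))))]

theorem norm_le_exp_of_hasDerivAt_neg_smul_mulVec {B : Matrix ι ι ℝ} {lam c : ℝ}
    (hlam : lam ∈ lowerBounds (rayleighValues B))
    (hc : 0 ≤ c) {v : ℝ → ι → ℝ} (hv : ∀ s, 0 ≤ s → HasDerivAt v (-c • (B *ᵥ v s)) s)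
    {t : ℝ} (ht : 0 ≤ t) :
    ‖toLp 2 (v t)‖ ≤ exp (-(c * lam) * t) * ‖toLp 2 (v 0)‖ := by
  have hdecay := norm_le_exp_mul_of_inner_deriv_le (K := -(c * lam)) le_rfl
    (fun s hs => (hv s hs).toLp) (fun s _ => ?_) ht
  · simpa using hdecay
  · have hdiss := dotProduct_neg_smul_mulVec_add_le hlam hc (v s) 0
    simp only [add_zero, WithLp.toLp_zero, norm_zero, mul_zero] at hdiss
    rw [← dotProduct_eq_inner_toLp]
    exact hdiss.trans_eq (by ring)

theorem norm_sub_le_of_hasDerivAt_neg_smul_mulVec {A : ℝ → Matrix ι ι ℝ} {B : Matrix ι ι ℝ}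
    {lam c δ : ℝ}
    (hlam : lam ∈ lowerBounds (rayleighValues B))
    (hc : 0 ≤ c) (hδ : 0 ≤ δ)
    (hAB : ∀ s, 0 ≤ s → ∀ x, ‖toLp 2 ((A s - B) *ᵥ x)‖ ≤ δ * ‖toLp 2 x‖)
    {u v : ℝ → ι → ℝ} (hu : ∀ s, 0 ≤ s → HasDerivAt u (-c • (A s *ᵥ u s)) s)
    (hv : ∀ s, 0 ≤ s → HasDerivAt v (-c • (B *ᵥ v s)) s) (huv : u 0 = v 0)
    {t : ℝ} (ht : 0 ≤ t) :
    ‖toLp 2 (u t - v t)‖ ≤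
      c * δ * ‖toLp 2 (v 0)‖ * t * exp (c * (δ - lam) * t) := by
  have hv_decay : ∀ s, 0 ≤ s →
      c * δ * ‖toLp 2 (v s)‖ ≤ c * δ * ‖toLp 2 (v 0)‖ * exp (c * (δ - lam) * s) := by
    intro s hs
    have hexp : exp (-(c * lam) * s) ≤ exp (c * (δ - lam) * s) :=
      exp_le_exp.2 (by nlinarith [mul_nonneg (mul_nonneg hc hδ) hs])
    calc c * δ * ‖toLp 2 (v s)‖
        ≤ c * δ * (exp (-(c * lam) * s) * ‖toLp 2 (v 0)‖) := by
          gcongr; exact norm_le_exp_of_hasDerivAt_neg_smul_mulVec hlam hc hv hs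
      _ ≤ c * δ * (exp (c * (δ - lam) * s) * ‖toLp 2 (v 0)‖) := by gcongr
      _ = _ := by ring
  have hw := norm_le_exp_mul_of_inner_deriv_le (w := fun s => toLp 2 (u s - v s))
    (K := c * (δ - lam)) (c := c * δ * ‖toLp 2 (v 0)‖) (by positivity)
    (fun s hs => ((hu s hs).sub (hv s hs)).toLp) (fun s hs => ?_) ht
  · simp only [huv, sub_self, WithLp.toLp_zero, norm_zero, zero_add] at hw
    exact hw.trans_eq (by ring)
  · rw [← dotProduct_eq_inner_toLp]
    refine (dotProduct_sub_neg_smul_mulVec_le hlam hc (hAB s hs) (u s) (v s)).trans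
      (add_le_add_right ?_ _)
    exact mul_le_mul_of_nonneg_right (hv_decay s hs) (norm_nonneg _)

end EuclideanCoordinates

theorem residual_comparison_gronwall_general
    (n : ℕ) (hn : 1 ≤ n) (B₀ : Matrix (Fin n) (Fin n) ℝ) (lam0 Δ : ℝ)
    (y : Fin n → ℝ)
    (hlam0 : IsLeast
      {r : ℝ | ∃ v : Fin n → ℝ, (∑ i, v i ^ 2) = 1 ∧ r = v ⬝ᵥ B₀.mulVec v} lam0)
    (hΔ : 0 ≤ Δ)
    (A : ℝ → Matrix (Fin n) (Fin n) ℝ)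
    (hop : ∀ s : ℝ, 0 ≤ s → ∀ w : Fin n → ℝ,
      Real.sqrt (∑ i, ((A s - B₀).mulVec w i) ^ 2) ≤
        (n : ℝ) * Δ * Real.sqrt (∑ i, w i ^ 2))
    (u v : ℝ → Fin n → ℝ)
    (hu : ∀ s : ℝ, 0 ≤ s → HasDerivAt u (-(1 / (n : ℝ)) • (A s).mulVec (u s)) s)
    (hv : ∀ s : ℝ, 0 ≤ s → HasDerivAt v (-(1 / (n : ℝ)) • B₀.mulVec (v s)) s)
    (hu0 : u 0 = -y) (hv0 : v 0 = -y) :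
    ∀ t : ℝ, 0 ≤ t →
      Real.sqrt (∑ i, (u t i - v t i) ^ 2) ≤
        Real.sqrt (∑ i, y i ^ 2) * Δ * t * Real.exp (-((lam0 - n * Δ) * t / n)) := by
  intro t ht
  have hn0 : (0 : ℝ) < n := by exact_mod_cast hn
  have hop' : ∀ s, 0 ≤ s → ∀ w : Fin n → ℝ,
      ‖toLp 2 ((A s - B₀) *ᵥ w)‖ ≤ n * Δ * ‖toLp 2 w‖ := by
    simpa only [sqrt_sum_sq_eq_norm_toLp] using hop
  have hcomp := norm_sub_le_of_hasDerivAt_neg_smul_mulVec hlam0.2 (by positivity)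
    (by positivity) hop' hu hv (hu0.trans hv0.symm) ht
  have hcoupling : 1 / n * (n * Δ) = Δ := by field_simp
  have hrate : 1 / n * (n * Δ - lam0) * t = -((lam0 - n * Δ) * t / n) := by field_simp; ring
  rw [hcoupling, hrate, hv0, WithLp.toLp_neg, norm_neg] at hcomp
  calc √(∑ i, (u t i - v t i) ^ 2) = ‖toLp 2 (u t - v t)‖ := sqrt_sum_sq_eq_norm_toLp _
    _ ≤ _ := hcomp
    _ = _ := by rw [sqrt_sum_sq_eq_norm_toLp]; ring

/-- **Grönwall-type comparison of the network residual with the NTK residual.**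
Let `B₀` be symmetric positive semidefinite with smallest eigenvalue `λ₀`
(smallest value of `vᵀB₀v` over Euclidean-unit vectors `v`), let `Δ ≥ 0`, and suppose
`‖A(s) − B₀‖_op ≤ nΔ` for all `s ≥ 0` (operator norm w.r.t. the Euclidean norm).
If `u' = −(1/n)A(s)u`, `v' = −(1/n)B₀v` with `u(0) = v(0) = −y`, then
`‖u(t) − v(t)‖₂ ≤ ‖y‖₂ Δ t e^{−(λ₀ − nΔ)t/n}` for all `t ≥ 0`. -/
theorem residual_comparison_gronwall
    (n : ℕ) (hn : 1 ≤ n) (B₀ : Matrix (Fin n) (Fin n) ℝ) (lam0 Δ : ℝ)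
    (y : Fin n → ℝ)
    (hB₀symm : B₀.IsSymm)
    (hB₀psd : ∀ v : Fin n → ℝ, 0 ≤ v ⬝ᵥ B₀.mulVec v)
    (hlam0 : IsLeast
      {r : ℝ | ∃ v : Fin n → ℝ, (∑ i, v i ^ 2) = 1 ∧ r = v ⬝ᵥ B₀.mulVec v} lam0)
    (hΔ : 0 ≤ Δ)
    (A : ℝ → Matrix (Fin n) (Fin n) ℝ) (hA : Continuous A)
    (hop : ∀ s : ℝ, 0 ≤ s → ∀ w : Fin n → ℝ,
      Real.sqrt (∑ i, ((A s - B₀).mulVec w i) ^ 2) ≤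
        (n : ℝ) * Δ * Real.sqrt (∑ i, w i ^ 2))
    (u v : ℝ → Fin n → ℝ)
    (hu : ∀ s : ℝ, 0 ≤ s → HasDerivAt u (-(1 / (n : ℝ)) • (A s).mulVec (u s)) s)
    (hv : ∀ s : ℝ, 0 ≤ s → HasDerivAt v (-(1 / (n : ℝ)) • B₀.mulVec (v s)) s)
    (hu0 : u 0 = -y) (hv0 : v 0 = -y) :
    ∀ t : ℝ, 0 ≤ t →
      Real.sqrt (∑ i, (u t i - v t i) ^ 2) ≤
        Real.sqrt (∑ i, y i ^ 2) * Δ * t * Real.exp (-((lam0 - n * Δ) * t / n)) :=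
  residual_comparison_gronwall_general n hn B₀ lam0 Δ y hlam0 hΔ A hop u v hu hv hu0 hv0
end
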